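/- arXiv:1706.02391 — 8 statements merged into one kernel-verified Lean document; each statement's English description precedes it below -/
import Mathlib

section
/- For every n×n real matrix B there exist real symmetric n×n matrices A and M, with M invertible, such that B = A · M⁻¹; likewise there exist real symmetric n×n matrices A' and M', with M' invertible, such that B = M'⁻¹ · A'. -/
/-!
A real matrix `B` is self-adjoint for a nondegenerate symmetric bilinear form, i.e. there is
a symmetric invertible `M` with `Bᵀ M = M B`; then `M B` is symmetric and `B = M⁻¹ (M B)`,
and applying this to `Bᵀ` gives the factorization on the other side.

To build the form, view `ℝⁿ` as a torsion `ℝ[X]`-module with `X` acting by `B`; it is a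
finite direct sum of cyclic modules `ℝ[X] ⧸ (q)`, so it suffices to treat those. On
`ℝ[X] ⧸ (q)` with `q` monic of degree `d`, take `⟨a, b⟩ = ℓ (a b)` with `ℓ` the coefficient
of `X ^ (d - 1)` in the reduced representative: multiplication is self-adjoint because the
ring is commutative, and if `a` is represented by `g ≠ 0` of degree `k < d`, then
`ℓ (a X ^ (d - 1 - k))` is the leading coefficient of `g`.
-/

open Polynomial DirectSum Matrix

section SelfAdjointForm

variable (K A M : Type*) [CommRing K] [CommRing A] [Algebra K A]
  [AddCommGroup M] [Module K M] [Module A M] [IsScalarTower K A M]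

def HasSelfAdjointForm : Prop :=
  ∃ B : LinearMap.BilinForm K M, B.IsSymm ∧ B.SeparatingLeft ∧
    ∀ a : A, LinearMap.IsAdjointPair B B (a • ·) (a • ·)

variable {K A M}

theorem HasSelfAdjointForm.of_linearEquiv {N : Type*} [AddCommGroup N] [Module K N]
    [Module A N] [IsScalarTower K A N] (e : M ≃ₗ[A] N) (h : HasSelfAdjointForm K A N) :
    HasSelfAdjointForm K A M := by
  obtain ⟨B, hsymm, hsep, hadj⟩ := h
  let e' : N ≃ₗ[K] M := (e.restrictScalars K).symm
  refine ⟨LinearMap.BilinForm.congr e' B, ⟨fun x y => ?_⟩, hsep.congr e' e',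
    fun a x y => ?_⟩
  · simp [LinearMap.BilinForm.congr_apply, hsymm.eq]
  · simpa [e', LinearMap.BilinForm.congr_apply] using hadj a (e x) (e y)

theorem HasSelfAdjointForm.directSum {ι : Type*} [Fintype ι] [DecidableEq ι] {W : ι → Type*}
    [∀ i, AddCommGroup (W i)] [∀ i, Module K (W i)] [∀ i, Module A (W i)]
    [∀ i, IsScalarTower K A (W i)] (h : ∀ i, HasSelfAdjointForm K A (W i)) :
    HasSelfAdjointForm K A (⨁ i, W i) := by
  choose B hsymm hsep hadj using h
  let Φ : LinearMap.BilinForm K (⨁ i, W i) :=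
    ∑ i, (B i).compl₁₂ (component K ι W i) (component K ι W i)
  have hΦ : ∀ v w, Φ v w = ∑ i, B i (v i) (w i) := fun v w => by
    simp only [Φ, LinearMap.sum_apply, LinearMap.compl₁₂_apply]; rfl
  refine ⟨Φ, ⟨fun v w => by simp only [hΦ, (hsymm _).eq (v _)]⟩, fun v hv => ?_,
    fun a v w => by simp only [hΦ, DirectSum.smul_apply, hadj _ a _ _]⟩
  ext j
  refine hsep j (v j) fun y => ?_
  simpa [hΦ, DirectSum.of_apply, apply_dite] using hv (DirectSum.of W j y)

theorem hasSelfAdjointForm_of_separatingLeft_mul_compr₂ {R : Type*} [CommRing R] [Algebra K R]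
    [Algebra A R] [IsScalarTower K A R] (ℓ : R →ₗ[K] K)
    (hℓ : ((LinearMap.mul K R).compr₂ ℓ).SeparatingLeft) :
    HasSelfAdjointForm K A R :=
  ⟨(LinearMap.mul K R).compr₂ ℓ, ⟨fun r s => by simp [mul_comm]⟩, hℓ, fun a r s => by
    simp only [LinearMap.compr₂_apply, LinearMap.mul_apply', smul_mul_assoc, mul_smul_comm]⟩

end SelfAdjointForm

theorem AdjoinRoot.separatingLeft_mul_compr₂_lcoeff_modByMonicHom {K : Type*} [CommRing K]
    {q : K[X]} (hq : q.Monic) :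
    ((LinearMap.mul K (AdjoinRoot q)).compr₂
      ((lcoeff K (q.natDegree - 1)).comp (modByMonicHom hq))).SeparatingLeft := by
  intro r hr
  obtain ⟨f, rfl⟩ := AdjoinRoot.mk_surjective r
  cases subsingleton_or_nontrivial K
  · rw [Subsingleton.elim f 0, map_zero]
  set g := f %ₘ q with hg
  have hfg : mk q f = mk q g := by rw [hg, ← modByMonicHom_mk hq, mk_leftInverse hq]
  rw [hfg] at hr ⊢
  by_contra hne
  have hg0 : g ≠ 0 := fun h => hne (by rw [h, map_zero])
  have hlt : g.natDegree < q.natDegree := natDegree_lt_natDegree hg0 (degree_modByMonic_lt f hq)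
  set m := q.natDegree - 1 - g.natDegree
  have hgm : g.natDegree + m = q.natDegree - 1 := by omega
  have hred : (g * X ^ m) %ₘ q = g * X ^ m := by
    rw [modByMonic_eq_self_iff hq]
    exact degree_lt_degree (by rw [natDegree_mul_X_pow m hg0]; omega)
  have hcoeff := hr (mk q (X ^ m))
  simp only [LinearMap.compr₂_apply, LinearMap.mul_apply', ← map_mul, LinearMap.comp_apply,
    modByMonicHom_mk, hred, lcoeff_apply, ← hgm, coeff_mul_X_pow] at hcoeff
  exact hg0 (leadingCoeff_eq_zero.mp hcoeff)

theorem hasSelfAdjointForm_quotient_span_singleton {K : Type*} [Field K] {q : K[X]}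
    (hq : q ≠ 0) : HasSelfAdjointForm K K[X] (K[X] ⧸ K[X] ∙ q) := by
  classical
  have hspan : (K[X] ∙ q) = K[X] ∙ normalize q :=
    Ideal.span_singleton_eq_span_singleton.mpr (associated_normalize q)
  have hmonic : HasSelfAdjointForm K K[X] (K[X] ⧸ K[X] ∙ normalize q) :=
    hasSelfAdjointForm_of_separatingLeft_mul_compr₂ _
      (AdjoinRoot.separatingLeft_mul_compr₂_lcoeff_modByMonicHom (monic_normalize hq))
  exact .of_linearEquiv (Submodule.quotEquivOfEq _ _ hspan) hmonic

theorem hasSelfAdjointForm_aeval' {K V : Type*} [Field K] [AddCommGroup V] [Module K V]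
    [FiniteDimensional K V] (f : Module.End K V) :
    HasSelfAdjointForm K K[X] (Module.AEval' f) := by
  classical
  obtain ⟨ι, _, p, hp, e, ⟨E⟩⟩ :=
    Module.equiv_directSum_of_isTorsion (Module.AEval.isTorsion_of_finiteDimensional K V f)
  exact .of_linearEquiv E
    (.directSum fun i => hasSelfAdjointForm_quotient_span_singleton (pow_ne_zero _ (hp i).ne_zero))

theorem Module.End.exists_isSymm_separatingLeft_isAdjointPair {K V : Type*} [Field K]
    [AddCommGroup V] [Module K V] [FiniteDimensional K V] (f : Module.End K V) :
    ∃ B : LinearMap.BilinForm K V,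
      B.IsSymm ∧ B.SeparatingLeft ∧ LinearMap.IsAdjointPair B B f f := by
  obtain ⟨B, hsymm, hsep, hadj⟩ := hasSelfAdjointForm_aeval' f
  let e : Module.AEval' f ≃ₗ[K] V := (Module.AEval'.of f).symm
  refine ⟨LinearMap.BilinForm.congr e B, ⟨fun x y => ?_⟩, hsep.congr e e, fun x y => ?_⟩
  · simp [LinearMap.BilinForm.congr_apply, hsymm.eq]
  · simpa [e, LinearMap.BilinForm.congr_apply, Module.AEval'.X_smul_of] using
      hadj X (e.symm x) (e.symm y)

theorem Matrix.exists_isSymm_isUnit_transpose_mul_eq_mul {K n : Type*} [Field K] [Fintype n]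
    [DecidableEq n] (A : Matrix n n K) :
    ∃ M : Matrix n n K, M.IsSymm ∧ IsUnit M ∧ Aᵀ * M = M * A := by
  obtain ⟨B, hsymm, hsep, hadj⟩ :=
    Module.End.exists_isSymm_separatingLeft_isAdjointPair (Matrix.toLin' A)
  refine ⟨LinearMap.toMatrix₂' K B, B.isSymm_toMatrix'_iff_isSymm.mpr hsymm, ?_, ?_⟩
  · rw [isUnit_iff_isUnit_det, isUnit_iff_ne_zero, ← Matrix.separatingLeft_iff_det_ne_zero]
    exact hsep.toMatrix₂'
  · refine (isAdjointPair_toLinearMap₂' _ _ _ _).mp ?_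
    rwa [Matrix.toLinearMap₂'_toMatrix']

/-- Any real square matrix `B` can be written as `B = A * M⁻¹` and as `B = M'⁻¹ * A'`
with `A`, `M`, `A'`, `M'` real symmetric matrices and `M`, `M'` invertible. -/
theorem symmetric_factorization_of_square_matrix (n : ℕ) (B : Matrix (Fin n) (Fin n) ℝ) :
    (∃ A M : Matrix (Fin n) (Fin n) ℝ, A.IsSymm ∧ M.IsSymm ∧ IsUnit M ∧ B = A * M⁻¹) ∧
    (∃ A' M' : Matrix (Fin n) (Fin n) ℝ, A'.IsSymm ∧ M'.IsSymm ∧ IsUnit M' ∧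
      B = M'⁻¹ * A') := by
  obtain ⟨M, hM, hMu, hMB⟩ := Bᵀ.exists_isSymm_isUnit_transpose_mul_eq_mul
  obtain ⟨M', hM', hM'u, hM'B⟩ := B.exists_isSymm_isUnit_transpose_mul_eq_mul
  rw [transpose_transpose] at hMB
  refine ⟨⟨B * M, M, ?_, hM, hMu, ?_⟩, ⟨M' * B, M', ?_, hM', hM'u, ?_⟩⟩
  · rw [IsSymm, transpose_mul, hM.eq, hMB]
  · rw [mul_nonsing_inv_cancel_right _ _ ((isUnit_iff_isUnit_det M).mp hMu)]
  · rw [IsSymm, transpose_mul, hM'.eq, hM'B]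
  · rw [nonsing_inv_mul_cancel_left _ _ ((isUnit_iff_isUnit_det M').mp hM'u)]
end

section
/- Let Θ be a Jacobi-type pencil with associated operator A and associated polynomials (p_n). Then for each n ≥ 0 there exist real numbers d_{n,0}, …, d_{n,n} with d_{n,n} > 0 such that e_n = d_{n,n} A^n e₀ + Σ_{j=0}^{n−1} d_{n,j} A^j e₀. -/
open Polynomial MeasureTheory

noncomputable section

/-- The standard basis of the space of finitely supported complex sequences. -/
def e (n : ℕ) : ℕ →₀ ℂ := Finsupp.single n 1

/-- The standard basis extended by zero to negative indices. -/
def eZ (n : ℤ) : ℕ →₀ ℂ := if n < 0 then 0 else e n.toNat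

/-- Extension of a real sequence by zero to negative indices. -/
def extZ (a : ℕ → ℝ) (n : ℤ) : ℝ := if n < 0 then 0 else a n.toNat

/-- Extension of a sequence of polynomials by zero to negative indices. -/
def extP (p : ℕ → Polynomial ℂ) (n : ℤ) : Polynomial ℂ := if n < 0 then 0 else p n.toNat

/-- The data of a Jacobi-type pencil `Θ = (J₃, J₅, α, β)`:
`a`, `b` are the entries of the Jacobi matrix `J₃` (`a n > 0`);
`al`, `be`, `ga` are the entries of the five-diagonal matrix `J₅` (`ga n > 0`);
`α > 0`, `β ∈ ℝ`. -/
structure JacobiPencil where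
  a : ℕ → ℝ
  b : ℕ → ℝ
  al : ℕ → ℝ
  be : ℕ → ℝ
  ga : ℕ → ℝ
  α : ℝ
  β : ℝ
  ha : ∀ n, 0 < a n
  hga : ∀ n, 0 < ga n
  hα : 0 < α

/-- The `n`-th column `J₃ e_n = a_{n-1} e_{n-1} + b_n e_n + a_n e_{n+1}` of the Jacobi
matrix (terms with negative indices omitted). -/
def J3col (Θ : JacobiPencil) (n : ℕ) : ℕ →₀ ℂ :=
  (extZ Θ.a ((n : ℤ) - 1) : ℂ) • eZ ((n : ℤ) - 1) + (Θ.b n : ℂ) • e n + (Θ.a n : ℂ) • e (n + 1)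

/-- The `n`-th column
`J₅ e_n = γ_{n-2} e_{n-2} + β_{n-1} e_{n-1} + α_n e_n + β_n e_{n+1} + γ_n e_{n+2}`
of the five-diagonal matrix (terms with negative indices omitted). -/
def J5col (Θ : JacobiPencil) (n : ℕ) : ℕ →₀ ℂ :=
  (extZ Θ.ga ((n : ℤ) - 2) : ℂ) • eZ ((n : ℤ) - 2)
    + (extZ Θ.be ((n : ℤ) - 1) : ℂ) • eZ ((n : ℤ) - 1)
    + (Θ.al n : ℂ) • e n + (Θ.be n : ℂ) • e (n + 1) + (Θ.ga n : ℂ) • e (n + 2)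

/-- `A` is the associated operator of the Jacobi-type pencil `Θ`:
`A e₀ = (1/α)(e₁ - β e₀)` and `A (J₃ eₙ) = J₅ eₙ` for all `n`. -/
def IsAssociatedOperator (Θ : JacobiPencil) (A : Module.End ℂ (ℕ →₀ ℂ)) : Prop :=
  A (e 0) = ((Θ.α : ℂ))⁻¹ • (e 1 - (Θ.β : ℂ) • e 0) ∧ ∀ n : ℕ, A (J3col Θ n) = J5col Θ n

/-- `p` is the family of polynomials associated to the Jacobi-type pencil `Θ`:
`p₀ = 1`, `p₁(λ) = αλ + β`, and for all `n ≥ 0`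
`γ_n p_{n+2} = -γ_{n-2} p_{n-2} - (β_{n-1} - λ a_{n-1}) p_{n-1}
  - (α_n - λ b_n) p_n - (β_n - λ a_n) p_{n+1}`,
with `p_{-2} = p_{-1} = 0` and coefficients with negative indices set to zero. -/
def IsAssociatedPolynomials (Θ : JacobiPencil) (p : ℕ → Polynomial ℂ) : Prop :=
  p 0 = 1 ∧ p 1 = C (Θ.α : ℂ) * X + C (Θ.β : ℂ) ∧
  ∀ n : ℕ, C (Θ.ga n : ℂ) * p (n + 2) =
      - C (extZ Θ.ga ((n : ℤ) - 2) : ℂ) * extP p ((n : ℤ) - 2)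
      - (C (extZ Θ.be ((n : ℤ) - 1) : ℂ) - X * C (extZ Θ.a ((n : ℤ) - 1) : ℂ))
          * extP p ((n : ℤ) - 1)
      - (C (Θ.al n : ℂ) - X * C (Θ.b n : ℂ)) * p n
      - (C (Θ.be n : ℂ) - X * C (Θ.a n : ℂ)) * p (n + 1)

/-- The `l₂` inner product `Σ_{k≥0} f(k) conj(g(k))` of two finitely supported sequences. -/
def ipl2 (f g : ℕ →₀ ℂ) : ℂ := ∑ k ∈ f.support ∪ g.support, f k * (starRingEnd ℂ) (g k)

/-- `v` is a combination of `A^0 e₀, …, A^n e₀` with positive coefficient at `A^n e₀`. -/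
def Good (A : Module.End ℂ (ℕ →₀ ℂ)) (n : ℕ) (v : ℕ →₀ ℂ) : Prop :=
  ∃ d : ℕ → ℝ, 0 < d n ∧ v = ∑ j ∈ Finset.range (n + 1), (d j : ℂ) • ((A ^ j) (e 0))

/-- `v` is a real combination of `A^j e₀` for `j < N`. -/
def Low (A : Module.End ℂ (ℕ →₀ ℂ)) (N : ℕ) (v : ℕ →₀ ℂ) : Prop :=
  ∃ d : ℕ → ℝ, v = ∑ j ∈ Finset.range N, (d j : ℂ) • ((A ^ j) (e 0))

lemma sum_ext {A : Module.End ℂ (ℕ →₀ ℂ)} (d : ℕ → ℝ) {M N : ℕ} (h : M ≤ N) :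
    ∑ j ∈ Finset.range M, (d j : ℂ) • ((A ^ j) (e 0))
      = ∑ j ∈ Finset.range N, ((if j < M then d j else 0 : ℝ) : ℂ) • ((A ^ j) (e 0)) := by
  have h1 : ∑ j ∈ Finset.range N, ((if j < M then d j else 0 : ℝ) : ℂ) • ((A ^ j) (e 0))
      = ∑ j ∈ Finset.range M, ((if j < M then d j else 0 : ℝ) : ℂ) • ((A ^ j) (e 0)) :=
    (Finset.sum_subset (Finset.range_subset_range.mpr h) (fun j _ hj => by
      rw [if_neg (by simpa using hj)]; simp)).symm
  rw [h1]
  exact Finset.sum_congr rfl fun j hj => by rw [if_pos (Finset.mem_range.mp hj)]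

lemma low_mono {A : Module.End ℂ (ℕ →₀ ℂ)} {M N : ℕ} (h : M ≤ N) {v : ℕ →₀ ℂ} :
    Low A M v → Low A N v
  | ⟨d, hv⟩ => ⟨fun j => if j < M then d j else 0, by rw [hv, sum_ext d h]⟩

lemma low_zero (A : Module.End ℂ (ℕ →₀ ℂ)) (N : ℕ) : Low A N 0 := ⟨0, by simp⟩

lemma low_add {A : Module.End ℂ (ℕ →₀ ℂ)} {N : ℕ} {v w : ℕ →₀ ℂ} :
    Low A N v → Low A N w → Low A N (v + w)
  | ⟨d, hv⟩, ⟨d', hw⟩ => ⟨d + d', by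
      rw [hv, hw, ← Finset.sum_add_distrib]
      exact Finset.sum_congr rfl fun j _ => by
        simp only [Pi.add_apply, Complex.ofReal_add, add_smul]⟩

lemma low_smul {A : Module.End ℂ (ℕ →₀ ℂ)} {N : ℕ} {v : ℕ →₀ ℂ} (c : ℝ) :
    Low A N v → Low A N ((c : ℂ) • v)
  | ⟨d, hv⟩ => ⟨fun j => c * d j, by
      rw [hv, Finset.smul_sum]
      exact Finset.sum_congr rfl fun j _ => by push_cast [smul_smul]; ring_nf⟩

lemma low_neg {A : Module.End ℂ (ℕ →₀ ℂ)} {N : ℕ} {v : ℕ →₀ ℂ} (h : Low A N v) :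
    Low A N (-v) := by
  have := low_smul (-1) h
  simpa using this

lemma good_low {A : Module.End ℂ (ℕ →₀ ℂ)} {n : ℕ} {v : ℕ →₀ ℂ} :
    Good A n v → Low A (n + 1) v
  | ⟨d, _, hv⟩ => ⟨d, hv⟩

lemma good_smul_pos {A : Module.End ℂ (ℕ →₀ ℂ)} {n : ℕ} {v : ℕ →₀ ℂ} {c : ℝ} (hc : 0 < c) :
    Good A n v → Good A n ((c : ℂ) • v)
  | ⟨d, hd, hv⟩ => ⟨fun j => c * d j, mul_pos hc hd, by
      rw [hv, Finset.smul_sum]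
      exact Finset.sum_congr rfl fun j _ => by push_cast [smul_smul]; ring_nf⟩

lemma good_add_low {A : Module.End ℂ (ℕ →₀ ℂ)} {n : ℕ} {v w : ℕ →₀ ℂ} :
    Good A n v → Low A n w → Good A n (v + w)
  | ⟨d, hd, hv⟩, ⟨d', hw⟩ => by
    refine ⟨d + fun j => if j < n then d' j else 0, by simpa using hd, ?_⟩
    rw [hv, hw, sum_ext d' (Nat.le_succ n), ← Finset.sum_add_distrib]
    exact Finset.sum_congr rfl fun j _ => by
      simp only [Pi.add_apply, Complex.ofReal_add, add_smul]

lemma good_applyA {A : Module.End ℂ (ℕ →₀ ℂ)} {n : ℕ} {v : ℕ →₀ ℂ} :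
    Good A n v → Good A (n + 1) (A v)
  | ⟨d, hd, hv⟩ => by
    refine ⟨fun j => if j = 0 then 0 else d (j - 1), by simpa using hd, ?_⟩
    rw [hv, map_sum]
    conv_rhs => rw [Finset.sum_range_succ']
    simp only [eq_self_iff_true, if_true, Nat.add_sub_cancel,
      if_neg (Nat.succ_ne_zero _), Complex.ofReal_zero, zero_smul, add_zero]
    exact Finset.sum_congr rfl fun j _ => by
      rw [_root_.map_smul, pow_succ', Module.End.mul_apply]

lemma eZ_natCast (k : ℕ) : eZ (k : ℤ) = e k := by simp [eZ]

lemma good_e (Θ : JacobiPencil) (A : Module.End ℂ (ℕ →₀ ℂ))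
    (hA : IsAssociatedOperator Θ A) : ∀ n, Good A n (e n) := by
  intro n
  induction n using Nat.strong_induction_on with
  | _ n ih =>
    rcases n with _ | n
    · exact ⟨fun _ => 1, one_pos, by simp⟩
    rcases n with _ | m
    · -- n = 1
      have hα : (Θ.α : ℂ) ≠ 0 := by exact_mod_cast Θ.hα.ne'
      have h2 : (Θ.α : ℂ) • A (e 0) = e 1 - (Θ.β : ℂ) • e 0 := by
        rw [hA.1, smul_smul, mul_inv_cancel₀ hα, one_smul]
      have h3 : e 1 = (Θ.α : ℂ) • A (e 0) + (Θ.β : ℂ) • e 0 := by rw [h2]; abel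
      refine ⟨fun j => if j = 1 then Θ.α else Θ.β, by simpa using Θ.hα, ?_⟩
      rw [h3]
      simp [Finset.sum_range_succ]
      abel
    · -- n = m + 2
      have hez : ∀ z : ℤ, ∀ N : ℕ, z < (N : ℤ) → N ≤ m + 2 → Low A N (eZ z) := by
        intro z N hzN hN
        rcases lt_or_ge z 0 with h | h
        · rw [eZ, if_pos h]; exact low_zero A N
        · lift z to ℕ using h
          rw [eZ_natCast]
          have hz : z < N := by exact_mod_cast hzN
          exact low_mono (by omega) (good_low (ih z (by omega)))
      have hL1 : Low A (m + 1)
          ((extZ Θ.a ((m : ℤ) - 1) : ℂ) • eZ ((m : ℤ) - 1) + (Θ.b m : ℂ) • e m) := by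
        apply low_add
        · exact low_smul _ (hez _ _ (by omega) (by omega))
        · exact low_smul _ (good_low (ih m (by omega)))
      have hGm1 : Good A (m + 1) ((Θ.a m : ℂ) • e (m + 1)) :=
        good_smul_pos (Θ.ha m) (ih (m + 1) (by omega))
      have hG3 : Good A (m + 1) (J3col Θ m) := by
        have heq : J3col Θ m = (Θ.a m : ℂ) • e (m + 1) +
            ((extZ Θ.a ((m : ℤ) - 1) : ℂ) • eZ ((m : ℤ) - 1) + (Θ.b m : ℂ) • e m) := by
          unfold J3col; abel
        rw [heq]
        exact good_add_low hGm1 hL1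
      have hG5 : Good A (m + 2) (J5col Θ m) := by
        rw [← hA.2 m]; exact good_applyA hG3
      have hw : Low A (m + 2)
          ((extZ Θ.ga ((m : ℤ) - 2) : ℂ) • eZ ((m : ℤ) - 2)
            + (extZ Θ.be ((m : ℤ) - 1) : ℂ) • eZ ((m : ℤ) - 1)
            + (Θ.al m : ℂ) • e m + (Θ.be m : ℂ) • e (m + 1)) := by
        apply low_add
        apply low_add
        apply low_add
        · exact low_smul _ (hez _ _ (by omega) (by omega))
        · exact low_smul _ (hez _ _ (by omega) (by omega))
        · exact low_smul _ (low_mono (by omega) (good_low (ih m (by omega))))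
        · exact low_smul _ (good_low (ih (m + 1) (by omega)))
      have hGg : Good A (m + 2) ((Θ.ga m : ℂ) • e (m + 2)) := by
        have heq : (Θ.ga m : ℂ) • e (m + 2) = J5col Θ m +
            -((extZ Θ.ga ((m : ℤ) - 2) : ℂ) • eZ ((m : ℤ) - 2)
              + (extZ Θ.be ((m : ℤ) - 1) : ℂ) • eZ ((m : ℤ) - 1)
              + (Θ.al m : ℂ) • e m + (Θ.be m : ℂ) • e (m + 1)) := by
          unfold J5col; abel
        rw [heq]
        exact good_add_low hG5 (low_neg hw)
      have hfin := good_smul_pos (inv_pos.mpr (Θ.hga m)) hGg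
      have hne : (Θ.ga m : ℂ) ≠ 0 := by exact_mod_cast (Θ.hga m).ne'
      have heq2 : (((Θ.ga m)⁻¹ : ℝ) : ℂ) • ((Θ.ga m : ℂ) • e (m + 2)) = e (m + 2) := by
        rw [smul_smul]; push_cast; rw [inv_mul_cancel₀ hne, one_smul]
      rwa [heq2] at hfin

/-- For each `n` there are reals `d_{n,0}, …, d_{n,n}` with `d_{n,n} > 0` such that
`e_n = d_{n,n} Aⁿ e₀ + Σ_{j=0}^{n-1} d_{n,j} Aʲ e₀`. -/
theorem basis_as_polynomial_in_A (Θ : JacobiPencil) (A : Module.End ℂ (ℕ →₀ ℂ))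
    (hA : IsAssociatedOperator Θ A) (p : ℕ → Polynomial ℂ)
    (hp : IsAssociatedPolynomials Θ p) (n : ℕ) :
    ∃ d : ℕ → ℝ, 0 < d n ∧
      e n = ∑ j ∈ Finset.range (n + 1), (d j : ℂ) • ((A ^ j) (e 0)) := by
  exact good_e Θ A hA n

end
end

section
/- Let Θ be a Jacobi-type pencil with associated operator A. Then for each n ≥ 0 there exist real numbers f_{n,0}, …, f_{n,n+1} with f_{n,n+1} > 0 such that A e_n = f_{n,n+1} e_{n+1} + Σ_{j=0}^{n} f_{n,j} e_j. -/
open Polynomial MeasureTheory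

noncomputable section

lemma J5_im (Θ : JacobiPencil) (m k : ℕ) : ((J5col Θ m) k).im = 0 := by
  simp only [J5col, eZ, e, extZ, Finsupp.add_apply, Finsupp.smul_apply, smul_eq_mul,
    Finsupp.coe_zero, Pi.zero_apply]
  split_ifs <;>
    simp only [Finsupp.single_apply, Finsupp.coe_zero, Pi.zero_apply] <;>
    (try split_ifs) <;>
    first | (exfalso; omega) | simp

lemma J5_zero (Θ : JacobiPencil) (m k : ℕ) (h : m + 3 ≤ k) : (J5col Θ m) k = 0 := by
  simp only [J5col, eZ, e, extZ, Finsupp.add_apply, Finsupp.smul_apply, smul_eq_mul,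
    Finsupp.coe_zero, Pi.zero_apply]
  split_ifs <;>
    simp only [Finsupp.single_apply, Finsupp.coe_zero, Pi.zero_apply] <;>
    (try split_ifs) <;>
    first | (exfalso; omega) | simp

lemma J5_top (Θ : JacobiPencil) (m : ℕ) : (J5col Θ m) (m + 2) = (Θ.ga m : ℂ) := by
  simp only [J5col, eZ, e, extZ, Finsupp.add_apply, Finsupp.smul_apply, smul_eq_mul,
    Finsupp.coe_zero, Pi.zero_apply]
  split_ifs <;>
    simp only [Finsupp.single_apply, Finsupp.coe_zero, Pi.zero_apply] <;>
    (try split_ifs) <;>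
    first | (exfalso; omega) | simp

lemma J5_real (Θ : JacobiPencil) (m k : ℕ) :
    ((((J5col Θ m) k).re : ℝ) : ℂ) = (J5col Θ m) k :=
  Complex.ext rfl (by simp [J5_im])

/-- For each `n` there are reals `f_{n,0}, …, f_{n,n+1}` with `f_{n,n+1} > 0` such that
`A e_n = f_{n,n+1} e_{n+1} + Σ_{j=0}^{n} f_{n,j} e_j`. -/
theorem A_on_basis (Θ : JacobiPencil) (A : Module.End ℂ (ℕ →₀ ℂ))
    (hA : IsAssociatedOperator Θ A) (n : ℕ) :
    ∃ f : ℕ → ℝ, 0 < f (n + 1) ∧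
      A (e n) = ∑ j ∈ Finset.range (n + 2), (f j : ℂ) • e j := by
  suffices H : ∀ n, ∃ r : ℕ → ℝ,
      (∀ k, A (e n) k = (r k : ℂ)) ∧ (∀ k, n + 2 ≤ k → r k = 0) ∧ 0 < r (n + 1) by
    obtain ⟨r, hr, hz, hp⟩ := H n
    refine ⟨r, hp, ?_⟩
    ext k
    rw [hr k, Finsupp.finset_sum_apply]
    simp only [Finsupp.smul_apply, e, Finsupp.single_apply, smul_eq_mul, mul_ite, mul_one,
      mul_zero]
    rw [Finset.sum_ite_eq' (Finset.range (n + 2)) k fun j => ((r j : ℂ))]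
    by_cases hk : k ∈ Finset.range (n + 2)
    · simp [hk]
    · simp only [hk, if_false]
      norm_cast
      exact hz k (by simpa using hk)
  clear n
  intro n
  induction n using Nat.strong_induction_on with
  | _ n ih =>
  match n, ih with
  | 0, _ =>
    refine ⟨fun k => if k = 0 then -Θ.β / Θ.α else if k = 1 then Θ.α⁻¹ else 0, ?_, ?_, ?_⟩
    · intro k
      have h0 : A (e 0) k = (Θ.α : ℂ)⁻¹ * ((e 1) k - (Θ.β : ℂ) * (e 0) k) := by
        rw [hA.1]; simp
      rw [h0]
      simp only [e, Finsupp.single_apply]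
      rcases k with _ | _ | k <;>
        (push_cast; (try norm_num); (try ring); (try omega))
    · intro k hk
      dsimp only
      split_ifs <;> first | omega | rfl
    · simpa using inv_pos.mpr Θ.hα
  | m + 1, ih =>
    have ha := Θ.ha m
    have haC : (Θ.a m : ℂ) ≠ 0 := by exact_mod_cast ha.ne'
    obtain ⟨rm, hrm, hzm, -⟩ := ih m (Nat.lt_succ_self m)
    obtain ⟨r', hprev, hz'⟩ :
        ∃ r' : ℕ → ℝ, (∀ k, A (eZ ((m : ℤ) - 1)) k = (r' k : ℂ)) ∧
          (∀ k, m + 1 ≤ k → r' k = 0) := by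
      match m with
      | 0 =>
        refine ⟨fun _ => 0, fun k => ?_, fun _ _ => rfl⟩
        norm_num [eZ]
      | m' + 1 =>
        obtain ⟨r', h1, h2, -⟩ := ih m' (by omega)
        have hE : eZ (((m' + 1 : ℕ) : ℤ) - 1) = e m' := by
          have h3 : (((m' + 1 : ℕ) : ℤ) - 1) = (m' : ℤ) := by push_cast; ring
          rw [h3]; simp [eZ]
        rw [hE]
        exact ⟨r', h1, fun k hk => h2 k (by omega)⟩
    have h1 : (extZ Θ.a ((m : ℤ) - 1) : ℂ) • A (eZ ((m : ℤ) - 1)) + (Θ.b m : ℂ) • A (e m)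
        + (Θ.a m : ℂ) • A (e (m + 1)) = J5col Θ m := by
      rw [← hA.2 m, J3col]; simp [map_add, _root_.map_smul]
    have hkey : ∀ k, (extZ Θ.a ((m : ℤ) - 1) : ℂ) * A (eZ ((m : ℤ) - 1)) k
        + (Θ.b m : ℂ) * (A (e m)) k + (Θ.a m : ℂ) * (A (e (m + 1))) k = (J5col Θ m) k := by
      intro k
      have h2 := congrArg (fun v : ℕ →₀ ℂ => v k) h1
      simpa [Finsupp.add_apply, Finsupp.smul_apply] using h2
    refine ⟨fun k => (Θ.a m)⁻¹ *
        (((J5col Θ m) k).re - extZ Θ.a ((m : ℤ) - 1) * r' k - Θ.b m * rm k), ?_, ?_, ?_⟩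
    · intro k
      have hk := hkey k
      rw [hprev k, hrm k] at hk
      push_cast
      rw [J5_real, inv_mul_eq_div, eq_div_iff haC]
      linear_combination hk
    · intro k hk2
      have e1 : ((J5col Θ m) k).re = 0 := by rw [J5_zero Θ m k (by omega)]; rfl
      dsimp only
      rw [e1, hz' k (by omega), hzm k (by omega)]
      ring
    · have e1 : ((J5col Θ m) (m + 2)).re = Θ.ga m := by
        rw [J5_top]; simp
      have e2 : r' (m + 2) = 0 := hz' _ (by omega)
      have e3 : rm (m + 2) = 0 := hzm _ (by omega)
      dsimp only
      rw [e1, e2, e3]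
      simp only [mul_zero, sub_zero]
      exact mul_pos (inv_pos.mpr ha) (Θ.hga m)

end
end

section
/- Let Θ be a Jacobi-type pencil with associated operator A and associated polynomials (p_n). Then p_n(A) e₀ = e_n for every n ≥ 0. -/
open Polynomial MeasureTheory

noncomputable section

/-- `p_n(A) e₀ = e_n` for every `n`. -/
theorem assoc_poly_of_A_on_e0 (Θ : JacobiPencil) (A : Module.End ℂ (ℕ →₀ ℂ))
    (hA : IsAssociatedOperator Θ A) (p : ℕ → Polynomial ℂ)
    (hp : IsAssociatedPolynomials Θ p) (n : ℕ) :
    (Polynomial.aeval A (p n)) (e 0) = e n := by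
  obtain ⟨hA0, hArec⟩ := hA
  obtain ⟨hp0, hp1, hprec⟩ := hp
  induction n using Nat.strong_induction_on with
  | _ n ih =>
    obtain _ | _ | n := n
    · simp [hp0]
    · have hα : (Θ.α : ℂ) ≠ 0 := by
        exact_mod_cast Θ.hα.ne'
      rw [hp1]
      simp only [map_add, map_mul, aeval_C, aeval_X, LinearMap.add_apply,
        Module.End.mul_apply, Module.algebraMap_end_apply, hA0]
      rw [smul_smul, mul_inv_cancel₀ hα, one_smul]
      abel
    · -- inductive step
      have hext : ∀ j : ℤ, j ≤ (n : ℤ) + 1 → (aeval A (extP p j)) (e 0) = eZ j := by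
        intro j hj
        by_cases h : j < 0
        · simp [extP, eZ, h]
        · push_neg at h
          have hlt : j.toNat < n + 2 := by omega
          simp only [extP, eZ, if_neg (not_lt.mpr h)]
          exact ih j.toNat hlt
      have h2 : (aeval A (extP p ((n : ℤ) - 2))) (e 0) = eZ ((n : ℤ) - 2) :=
        hext _ (by omega)
      have h1 : (aeval A (extP p ((n : ℤ) - 1))) (e 0) = eZ ((n : ℤ) - 1) :=
        hext _ (by omega)
      have hn : (aeval A (p n)) (e 0) = e n := ih n (by omega)
      have hn1 : (aeval A (p (n + 1))) (e 0) = e (n + 1) := ih (n + 1) (by omega)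
      have key := congrArg (fun q => (aeval A q) (e 0)) (hprec n)
      simp only [map_mul, map_sub, map_neg, aeval_C, aeval_X, Module.End.mul_apply,
        LinearMap.sub_apply, LinearMap.neg_apply, Module.algebraMap_end_apply,
        _root_.map_smul, h2, h1, hn, hn1] at key
      have hJ := hArec n
      rw [J3col, J5col] at hJ
      simp only [map_add, _root_.map_smul] at hJ
      have hcomb : (Θ.ga n : ℂ) • (aeval A (p (n + 2))) (e 0)
          = (Θ.ga n : ℂ) • e (n + 2) := by
        rw [key]
        have heq : -((extZ Θ.ga ((n : ℤ) - 2) : ℂ) • eZ ((n : ℤ) - 2))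
            - ((extZ Θ.be ((n : ℤ) - 1) : ℂ) • eZ ((n : ℤ) - 1)
              - (extZ Θ.a ((n : ℤ) - 1) : ℂ) • A (eZ ((n : ℤ) - 1)))
            - ((Θ.al n : ℂ) • e n - (Θ.b n : ℂ) • A (e n))
            - ((Θ.be n : ℂ) • e (n + 1) - (Θ.a n : ℂ) • A (e (n + 1)))
            = -((extZ Θ.ga ((n : ℤ) - 2) : ℂ) • eZ ((n : ℤ) - 2))
              - (extZ Θ.be ((n : ℤ) - 1) : ℂ) • eZ ((n : ℤ) - 1)
              - (Θ.al n : ℂ) • e n - (Θ.be n : ℂ) • e (n + 1)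
              + ((extZ Θ.a ((n : ℤ) - 1) : ℂ) • A (eZ ((n : ℤ) - 1))
                + (Θ.b n : ℂ) • A (e n) + (Θ.a n : ℂ) • A (e (n + 1))) := by
          module
        rw [heq, hJ]
        module
      have hg : (Θ.ga n : ℂ) ≠ 0 := by
        exact_mod_cast (Θ.hga n).ne'
      exact smul_right_injective _ hg hcomb

end
end

section
/- Let Θ be a Jacobi-type pencil with associated operator A and associated polynomials (p_n). Then the sesquilinear functional S(u,v) := Σ_{k≥0} (u(A)e₀)(k) · conj((v(A)e₀)(k)) on complex polynomials satisfies S(p_n, p_m) = δ_{n,m} for all n, m ≥ 0; in particular the spectral function of Θ exists. -/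
open Polynomial MeasureTheory

noncomputable section

/-- The sesquilinear functional `S(u,v) = Σ_k (u(A)e₀)(k) conj((v(A)e₀)(k))` satisfies
`S(p_n, p_m) = δ_{n,m}`; in particular the spectral function of `Θ` exists. -/
theorem spectral_function_exists (Θ : JacobiPencil) (A : Module.End ℂ (ℕ →₀ ℂ))
    (hA : IsAssociatedOperator Θ A) (p : ℕ → Polynomial ℂ)
    (hp : IsAssociatedPolynomials Θ p) :
    (∀ n m : ℕ, ipl2 ((Polynomial.aeval A (p n)) (e 0)) ((Polynomial.aeval A (p m)) (e 0))
        = if n = m then 1 else 0) ∧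
    ∃ S : Polynomial ℂ → Polynomial ℂ → ℂ,
      ∀ n m : ℕ, S (p n) (p m) = if n = m then 1 else 0 := by
  classical
  obtain ⟨hA0, hAJ⟩ := hA
  obtain ⟨hp0, hp1, hprec⟩ := hp
  have hαne : (Θ.α : ℂ) ≠ 0 := by
    exact_mod_cast ne_of_gt Θ.hα
  have key : ∀ n : ℕ, (Polynomial.aeval A (p n)) (e 0) = e n := by
    intro n
    induction n using Nat.strong_induction_on with
    | _ n ih =>
      match n, ih with
      | 0, _ => simp [hp0]
      | 1, _ =>
        rw [hp1]
        simp only [map_add, map_mul, aeval_C, aeval_X, LinearMap.add_apply,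
          Module.End.mul_apply, Module.algebraMap_end_apply, hA0]
        rw [smul_smul, mul_inv_cancel₀ hαne, one_smul]
        abel
      | (n+2), ih =>
        have ihZ : ∀ m : ℤ, m ≤ (n : ℤ) + 1 →
            (Polynomial.aeval A (extP p m)) (e 0) = eZ m := by
          intro m hm
          rcases lt_or_ge m 0 with h | h
          · simp [extP, eZ, h]
          · have h1 : extP p m = p m.toNat := by simp [extP, not_lt.mpr h]
            have h2 : eZ m = e m.toNat := by simp [eZ, not_lt.mpr h]
            rw [h1, h2, ih m.toNat (by omega)]
        have Heval := congrArg (fun q => (Polynomial.aeval A q) (e 0)) (hprec n)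
        simp only [map_mul, map_sub, map_neg, aeval_C, aeval_X, LinearMap.sub_apply,
          LinearMap.neg_apply, Module.End.mul_apply, Module.algebraMap_end_apply] at Heval
        rw [ihZ ((n : ℤ) - 2) (by omega), ihZ ((n : ℤ) - 1) (by omega),
          ih n (by omega), ih (n+1) (by omega)] at Heval
        have hJ : (extZ Θ.a ((n : ℤ) - 1) : ℂ) • A (eZ ((n : ℤ) - 1))
            + (Θ.b n : ℂ) • A (e n) + (Θ.a n : ℂ) • A (e (n + 1)) = J5col Θ n := by
          rw [← hAJ n, J3col]
          simp only [map_add, LinearMap.map_smul]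
        have hgane : (Θ.ga n : ℂ) ≠ 0 := by exact_mod_cast ne_of_gt (Θ.hga n)
        have h2 : (Θ.ga n : ℂ) • (Polynomial.aeval A (p (n+2))) (e 0)
            = (Θ.ga n : ℂ) • e (n + 2) := by
          rw [Heval]
          rw [J5col] at hJ
          simp only [LinearMap.map_smul]
          linear_combination (norm := module) hJ
        exact smul_right_injective _ hgane h2
  have horth : ∀ n m : ℕ, ipl2 (e n) (e m) = if n = m then 1 else 0 := by
    intro n m
    unfold ipl2 e
    by_cases h : n = m
    · subst h
      rw [Finsupp.support_single_ne_zero _ one_ne_zero]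
      simp
    · simp [Finsupp.support_single_ne_zero, Finsupp.single_apply, h, Ne.symm h]
  have main : ∀ n m : ℕ,
      ipl2 ((Polynomial.aeval A (p n)) (e 0)) ((Polynomial.aeval A (p m)) (e 0))
        = if n = m then 1 else 0 := by
    intro n m
    rw [key n, key m]
    exact horth n m
  exact ⟨main, ⟨fun u v => ipl2 ((Polynomial.aeval A u) (e 0)) ((Polynomial.aeval A v) (e 0)),
    main⟩⟩

end
end

section
/- (Sufficiency part of the inverse spectral theorem.) Let σ be a nonnegative Borel measure on ℝ with σ(ℝ) = 1, all power moments finite, and ∫|g|² dσ > 0 for every nonzero complex polynomial g, and let T be a linear operator on the space of complex polynomials satisfying conditions (ii) and (iii). Then there exists a Jacobi-type pencil Θ (i.e., sequences a_n > 0, b_n ∈ ℝ, α_n, β_n ∈ ℝ, γ_n > 0, and constants α > 0, β ∈ ℝ) whose associated polynomials (p_n) satisfy ∫ (p_n(T)(1))(x) · conj((p_m(T)(1))(x)) dσ(x) = δ_{n,m} for all n, m ≥ 0; that is, the functional S(u,v) := ∫ u(T)(1) conj(v(T)(1)) dσ is the spectral function of Θ. -/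
/-!
The orthonormal polynomials `P n` of `σ` (Gram–Schmidt applied to the monomials, with positive
leading coefficients) have real coefficients. Multiplication by `X` is symmetric for `⟨·,·⟩_σ`
and raises degrees by one; by (ii) and (iii), `u ↦ T (X * u)` is symmetric and raises degrees by
two. So their matrices in the basis `P` are a Jacobi matrix `J₃` and a five-diagonal matrix `J₅`,
whose outermost diagonals are positive because the leading coefficients are. Take these as the
pencil, with `α, β` read off from `P 1 = α T(1) + β`. Expanding `T (X * P n)` once through `J₃`
and once through `J₅` gives exactly the recurrence of the associated polynomials, so by induction
`p n (T) 1 = P n`, and these are orthonormal.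
-/

open Polynomial MeasureTheory

noncomputable section

/-- The inner product `⟨u, v⟩_σ = ∫ u(x) conj(v(x)) dσ(x)` of two complex polynomials. -/
def ipm (σ : Measure ℝ) (u v : Polynomial ℂ) : ℂ :=
  ∫ x, u.eval (x : ℂ) * (starRingEnd ℂ) (v.eval (x : ℂ)) ∂σ

/-- All power moments of `σ` are finite. -/
def HasFiniteMoments (σ : Measure ℝ) : Prop := ∀ k : ℕ, Integrable (fun x => x ^ k) σ

/-- `∫ |g|² dσ > 0` for every nonzero complex polynomial `g`. -/
def PosOnPolys (σ : Measure ℝ) : Prop :=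
  ∀ g : Polynomial ℂ, g ≠ 0 → 0 < ∫ x, ‖g.eval (x : ℂ)‖ ^ 2 ∂σ

/-- Condition (ii): for each `k`, `T x^k = ξ_{k,k+1} x^{k+1} + Σ_{j=0}^k ξ_{k,j} x^j`
with `ξ_{k,k+1} > 0` and all `ξ_{k,j}` real. -/
def CondII (T : Module.End ℂ (Polynomial ℂ)) : Prop :=
  ∀ k : ℕ, ∃ ξ : ℕ → ℝ, 0 < ξ (k + 1) ∧
    T (X ^ k) = ∑ j ∈ Finset.range (k + 2), C (ξ j : ℂ) * X ^ j

/-- Condition (iii): `⟨T(x·u), v⟩_σ = ⟨u, T(x·v)⟩_σ` for all polynomials `u`, `v`,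
i.e., the operator `T Λ₀` is symmetric. -/
def CondIII (σ : Measure ℝ) (T : Module.End ℂ (Polynomial ℂ)) : Prop :=
  ∀ u v : Polynomial ℂ, ipm σ (T (X * u)) v = ipm σ u (T (X * v))

-- In `ComplexOrder`, `0 < z` means that `z` is real and positive.
open scoped ComplexOrder

lemma eq_zero_of_mem_degreeLT_zero {R : Type*} [Semiring R] {p : R[X]} (hp : p ∈ degreeLT R 0) :
    p = 0 := by
  simpa [mem_degreeLT] using hp

lemma X_pow_mem_degreeLT {R : Type*} [Semiring R] [Nontrivial R] {k n : ℕ} (h : k < n) :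
    (X ^ k : R[X]) ∈ degreeLT R n := by
  rw [mem_degreeLT, degree_X_pow]; exact_mod_cast h

lemma X_mul_mem_degreeLT {R : Type*} [Semiring R] [Nontrivial R] {n : ℕ} {p : R[X]}
    (hp : p ∈ degreeLT R n) : X * p ∈ degreeLT R (n + 1) := by
  rw [mem_degreeLT, (commute_X p).eq, degree_mul_X, Nat.cast_succ]
  exact WithBot.add_lt_add_right WithBot.one_ne_bot (mem_degreeLT.mp hp)

lemma mem_degreeLT_succ_of_X_pow_sub_mem {R : Type*} [Ring R] [Nontrivial R] {n : ℕ} {p : R[X]}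
    (hp : X ^ n - p ∈ degreeLT R n) : p ∈ degreeLT R (n + 1) := by
  simpa using sub_mem (X_pow_mem_degreeLT n.lt_succ_self) (degreeLT_mono n.le_succ hp)

lemma coeff_eq_one_of_X_pow_sub_mem {R : Type*} [Ring R] {n : ℕ} {p : R[X]}
    (hp : X ^ n - p ∈ degreeLT R n) : p.coeff n = 1 := by
  have := (degree_lt_iff_coeff_zero _ n).mp (mem_degreeLT.mp hp) n le_rfl
  rwa [coeff_sub, coeff_X_pow_self, sub_eq_zero, eq_comm] at this

lemma sub_smul_mem_degreeLT {K : Type*} [Field K] {n : ℕ} {p q : K[X]}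
    (hp : p ∈ degreeLT K (n + 1)) (hq : q ∈ degreeLT K (n + 1)) (hqn : q.coeff n ≠ 0) :
    p - (p.coeff n / q.coeff n) • q ∈ degreeLT K n := by
  rw [mem_degreeLT, degree_lt_iff_coeff_zero] at hp hq ⊢
  intro m hm
  rcases hm.eq_or_lt with rfl | hlt
  · simp [hqn]
  · simp [hp m hlt, hq m hlt]

lemma map_conj_mem_degreeLT {n : ℕ} {p : ℂ[X]} (hp : p ∈ degreeLT ℂ n) :
    p.map (starRingEnd ℂ) ∈ degreeLT ℂ n :=
  mem_degreeLT.mpr (degree_map_le.trans_lt (mem_degreeLT.mp hp))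

lemma extP_natCast (p : ℕ → ℂ[X]) (k : ℕ) : extP p k = p k := by
  rw [extP, if_neg (by omega), Int.toNat_natCast]

lemma extP_of_neg (p : ℕ → ℂ[X]) {i : ℤ} (hi : i < 0) : extP p i = 0 := if_pos hi

lemma extP_eq_ite (p : ℕ → ℂ[X]) (n j : ℕ) :
    extP p ((n : ℤ) - j) = if j ≤ n then p (n - j) else 0 := by
  unfold extP
  split_ifs <;> first | rfl | omega | (congr 1; omega)

lemma apply_extP {f : ℂ[X] → ℂ[X]} (hf : f 0 = 0) {p q : ℕ → ℂ[X]} {i : ℤ}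
    (h : ∀ k : ℕ, (k : ℤ) = i → f (p k) = q k) : f (extP p i) = extP q i := by
  unfold extP
  split_ifs with hi
  · exact hf
  · exact h _ (Int.toNat_of_nonneg (not_lt.mp hi))

def realPolys : Subring ℂ[X] := (mapRingHom (starRingEnd ℂ)).eqLocus (RingHom.id ℂ[X])

lemma mem_realPolys {p : ℂ[X]} : p ∈ realPolys ↔ p.map (starRingEnd ℂ) = p :=
  RingHom.mem_eqLocus

lemma C_mem_realPolys {c : ℂ} (hc : starRingEnd ℂ c = c) : C c ∈ realPolys := by
  rw [mem_realPolys, map_C, hc]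

lemma X_mem_realPolys : (X : ℂ[X]) ∈ realPolys := by
  rw [mem_realPolys, map_X]

lemma conj_coeff_of_mem_realPolys {p : ℂ[X]} (hp : p ∈ realPolys) (k : ℕ) :
    starRingEnd ℂ (p.coeff k) = p.coeff k := by
  rw [← coeff_map, mem_realPolys.mp hp]

section Ipm

variable {σ : Measure ℝ}

lemma ipm_eq_integral_eval (u v : ℂ[X]) :
    ipm σ u v = ∫ x, (u * v.map (starRingEnd ℂ)).eval (x : ℂ) ∂σ := by
  simp only [ipm, eval_mul, eval_map, ← eval₂_at_apply, Complex.conj_ofReal]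

lemma integrable_eval (hmom : HasFiniteMoments σ) (q : ℂ[X]) :
    Integrable (fun x : ℝ => q.eval (x : ℂ)) σ := by
  induction q using Polynomial.induction_on' with
  | add p q hp hq => exact (hp.add hq).congr (.of_forall fun x => by simp)
  | monomial k c =>
    simpa [eval_monomial, Complex.ofReal_pow] using ((hmom k).ofReal (𝕜 := ℂ)).const_mul c

lemma ipm_add_left (hmom : HasFiniteMoments σ) (u u' v : ℂ[X]) :
    ipm σ (u + u') v = ipm σ u v + ipm σ u' v := by
  simp only [ipm_eq_integral_eval, add_mul, eval_add]
  exact integral_add (integrable_eval hmom _) (integrable_eval hmom _)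

lemma ipm_smul_left (c : ℂ) (u v : ℂ[X]) : ipm σ (c • u) v = c * ipm σ u v := by
  simp only [ipm, eval_smul, smul_eq_mul, mul_assoc, integral_const_mul]

lemma conj_ipm (u v : ℂ[X]) : starRingEnd ℂ (ipm σ u v) = ipm σ v u := by
  simp only [ipm, ← integral_conj, map_mul, Complex.conj_conj, mul_comm]

lemma ipm_smul_right (c : ℂ) (u v : ℂ[X]) :
    ipm σ u (c • v) = starRingEnd ℂ c * ipm σ u v := by
  rw [← conj_ipm, ipm_smul_left, map_mul, conj_ipm]

lemma ipm_zero_right (u : ℂ[X]) : ipm σ u 0 = 0 := by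
  simp [ipm]

lemma ipm_map_conj (u v : ℂ[X]) :
    ipm σ (u.map (starRingEnd ℂ)) (v.map (starRingEnd ℂ)) = starRingEnd ℂ (ipm σ u v) := by
  simp only [ipm, ← integral_conj, eval_map, ← eval₂_at_apply, Complex.conj_ofReal, map_mul]

lemma ipm_X_mul (u v : ℂ[X]) : ipm σ (X * u) v = ipm σ u (X * v) := by
  simp only [ipm, eval_mul, eval_X, map_mul, Complex.conj_ofReal, mul_left_comm, mul_assoc]

lemma ipm_self_eq_integral (g : ℂ[X]) : ipm σ g g = ((∫ x, ‖g.eval (x : ℂ)‖ ^ 2 ∂σ : ℝ) : ℂ) := by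
  simp only [ipm, Complex.mul_conj', ← Complex.ofReal_pow, integral_complex_ofReal]

lemma eq_zero_of_ipm_self_eq_zero (hpos : PosOnPolys σ) {g : ℂ[X]} (hg : ipm σ g g = 0) :
    g = 0 := by
  by_contra hne
  have := hpos g hne
  rw [ipm_self_eq_integral, Complex.ofReal_eq_zero] at hg
  linarith

lemma ipm_one_one [IsProbabilityMeasure σ] : ipm σ 1 1 = 1 := by
  simp [ipm]

lemma ipm_add_right (hmom : HasFiniteMoments σ) (u v v' : ℂ[X]) :
    ipm σ u (v + v') = ipm σ u v + ipm σ u v' := by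
  rw [← conj_ipm, ipm_add_left hmom, map_add, conj_ipm, conj_ipm]

lemma ipm_sub_left (hmom : HasFiniteMoments σ) (u u' v : ℂ[X]) :
    ipm σ (u - u') v = ipm σ u v - ipm σ u' v := by
  rw [eq_sub_iff_add_eq, ← ipm_add_left hmom, sub_add_cancel]

lemma conj_ipm_of_mem_realPolys {u v : ℂ[X]} (hu : u ∈ realPolys) (hv : v ∈ realPolys) :
    starRingEnd ℂ (ipm σ u v) = ipm σ u v := by
  rw [← ipm_map_conj, mem_realPolys.mp hu, mem_realPolys.mp hv]

lemma ipm_eq_re_of_mem_realPolys {u v : ℂ[X]} (hu : u ∈ realPolys) (hv : v ∈ realPolys) :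
    ipm σ u v = (ipm σ u v).re :=
  (Complex.conj_eq_iff_re.mp (conj_ipm_of_mem_realPolys hu hv)).symm

lemma ipm_comm_of_mem_realPolys {u v : ℂ[X]} (hu : u ∈ realPolys) (hv : v ∈ realPolys) :
    ipm σ v u = ipm σ u v := by
  rw [← conj_ipm, conj_ipm_of_mem_realPolys hu hv]

end Ipm

lemma exists_sub_mem_degreeLT_ipm_eq_zero {σ : Measure ℝ} (hmom : HasFiniteMoments σ)
    (hpos : PosOnPolys σ) (n : ℕ) (p : ℂ[X]) :
    ∃ r, p - r ∈ degreeLT ℂ n ∧ ∀ q ∈ degreeLT ℂ n, ipm σ r q = 0 := by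
  induction n generalizing p with
  | zero =>
    refine ⟨p, by simp, fun q hq => ?_⟩
    rw [eq_zero_of_mem_degreeLT_zero hq, ipm_zero_right]
  | succ n ih =>
    obtain ⟨Q, hQ_sub, hQ_orth⟩ := ih (X ^ n)
    obtain ⟨r, hr_sub, hr_orth⟩ := ih p
    have hQ := mem_degreeLT_succ_of_X_pow_sub_mem hQ_sub
    have hQn := coeff_eq_one_of_X_pow_sub_mem hQ_sub
    have hQQ : ipm σ Q Q ≠ 0 := fun h => by
      simp [eq_zero_of_ipm_self_eq_zero hpos h] at hQn
    -- `Q`, the residual of `X ^ n`, complements `ℂ[X]_n` in `ℂ[X]_(n + 1)`: correct `r` along it.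
    set c := ipm σ r Q / ipm σ Q Q
    refine ⟨r - c • Q, ?_, fun q hq => ?_⟩
    · rw [sub_sub_eq_add_sub, add_sub_right_comm]
      exact add_mem (degreeLT_mono n.le_succ hr_sub) (Submodule.smul_mem _ c hQ)
    have hq₀ := sub_smul_mem_degreeLT hq hQ (by simp [hQn])
    set d := q.coeff n / Q.coeff n
    have hrQ : ipm σ (r - c • Q) Q = 0 := by
      rw [ipm_sub_left hmom, ipm_smul_left, div_mul_cancel₀ _ hQQ, sub_self]
    calc ipm σ (r - c • Q) q = ipm σ (r - c • Q) (q - d • Q) + ipm σ (r - c • Q) (d • Q) := by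
          rw [← ipm_add_right hmom, sub_add_cancel]
      _ = 0 := by
          rw [ipm_smul_right, hrQ, mul_zero, add_zero, ipm_sub_left hmom, ipm_smul_left,
            hr_orth _ hq₀, hQ_orth _ hq₀, mul_zero, sub_zero]

structure IsOrthonormalPolys (σ : Measure ℝ) (P : ℕ → ℂ[X]) : Prop where
  mem_degreeLT : ∀ n, P n ∈ degreeLT ℂ (n + 1)
  coeff_pos : ∀ n, 0 < (P n).coeff n
  orthogonal : ∀ n, ∀ q ∈ degreeLT ℂ n, ipm σ (P n) q = 0
  ipm_self : ∀ n, ipm σ (P n) (P n) = 1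

lemma exists_isOrthonormalPolys {σ : Measure ℝ} (hmom : HasFiniteMoments σ)
    (hpos : PosOnPolys σ) : ∃ P, IsOrthonormalPolys σ P := by
  choose Q hQ_sub hQ_orth using fun n => exists_sub_mem_degreeLT_ipm_eq_zero hmom hpos n (X ^ n)
  set s : ℕ → ℝ := fun n => ∫ x, ‖(Q n).eval (x : ℂ)‖ ^ 2 ∂σ
  have hs : ∀ n, 0 < s n := fun n =>
    hpos _ fun h => by simpa [h] using coeff_eq_one_of_X_pow_sub_mem (hQ_sub n)
  refine ⟨fun n => ((√(s n))⁻¹ : ℂ) • Q n, fun n => ?_, fun n => ?_, fun n q hq => ?_, fun n => ?_⟩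
  · exact Submodule.smul_mem _ _ (mem_degreeLT_succ_of_X_pow_sub_mem (hQ_sub n))
  · rw [coeff_smul, coeff_eq_one_of_X_pow_sub_mem (hQ_sub n), smul_eq_mul, mul_one,
      ← Complex.ofReal_inv, Complex.zero_lt_real]
    exact inv_pos.mpr (Real.sqrt_pos.mpr (hs n))
  · rw [ipm_smul_left, hQ_orth n q hq, mul_zero]
  · rw [ipm_smul_left, ipm_smul_right, ipm_self_eq_integral, ← Complex.ofReal_inv,
      Complex.conj_ofReal, ← Complex.ofReal_mul, ← Complex.ofReal_mul, Complex.ofReal_eq_one]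
    change (√(s n))⁻¹ * ((√(s n))⁻¹ * s n) = 1
    rw [← mul_assoc, ← mul_inv, Real.mul_self_sqrt (hs n).le, inv_mul_cancel₀ (hs n).ne']

namespace IsOrthonormalPolys

variable {σ : Measure ℝ} {P : ℕ → ℂ[X]} (hP : IsOrthonormalPolys σ P)
include hP

lemma coeff_ne_zero (n : ℕ) : (P n).coeff n ≠ 0 := (hP.coeff_pos n).ne'

lemma orthogonal' (n : ℕ) {q : ℂ[X]} (hq : q ∈ degreeLT ℂ n) : ipm σ q (P n) = 0 := by
  rw [← conj_ipm, hP.orthogonal n q hq, map_zero]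

lemma ipm_eq_ite (n m : ℕ) : ipm σ (P n) (P m) = if n = m then 1 else 0 := by
  rcases lt_trichotomy n m with h | rfl | h
  · rw [if_neg h.ne, hP.orthogonal' m (degreeLT_mono h (hP.mem_degreeLT n))]
  · rw [if_pos rfl, hP.ipm_self]
  · rw [if_neg h.ne', hP.orthogonal n _ (degreeLT_mono h (hP.mem_degreeLT m))]

lemma ipm_eq_coeff_div (hmom : HasFiniteMoments σ) {m : ℕ} {u : ℂ[X]}
    (hu : u ∈ degreeLT ℂ (m + 1)) : ipm σ u (P m) = u.coeff m / (P m).coeff m := by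
  have hsub := sub_smul_mem_degreeLT hu (hP.mem_degreeLT m) (hP.coeff_ne_zero m)
  set c := u.coeff m / (P m).coeff m
  calc ipm σ u (P m) = ipm σ (u - c • P m) (P m) + ipm σ (c • P m) (P m) := by
        rw [← ipm_add_left hmom, sub_add_cancel]
    _ = c := by rw [hP.orthogonal' m hsub, ipm_smul_left, hP.ipm_self, zero_add, mul_one]

lemma eq_sum (hmom : HasFiniteMoments σ) {n : ℕ} {u : ℂ[X]} (hu : u ∈ degreeLT ℂ n) :
    u = ∑ k ∈ Finset.range n, ipm σ u (P k) • P k := by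
  induction n generalizing u with
  | zero => simpa using eq_zero_of_mem_degreeLT_zero hu
  | succ n ih =>
    set c := ipm σ u (P n)
    have hsub : u - c • P n ∈ degreeLT ℂ n := by
      rw [show c = _ from hP.ipm_eq_coeff_div hmom hu]
      exact sub_smul_mem_degreeLT hu (hP.mem_degreeLT n) (hP.coeff_ne_zero n)
    have hcoeff : ∀ k ∈ Finset.range n, ipm σ (u - c • P n) (P k) = ipm σ u (P k) := by
      intro k hk
      rw [ipm_sub_left hmom, ipm_smul_left, hP.ipm_eq_ite, if_neg (Finset.mem_range.mp hk).ne',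
        mul_zero, sub_zero]
    calc u = (u - c • P n) + c • P n := (sub_add_cancel _ _).symm
      _ = _ := by rw [ih hsub, Finset.sum_congr rfl fun k hk => by rw [hcoeff k hk],
                    Finset.sum_range_succ]

-- The conjugate of `P n` has the same expansion coefficients as `P n`.
lemma map_conj (hmom : HasFiniteMoments σ) (n : ℕ) : (P n).map (starRingEnd ℂ) = P n := by
  have hmem := map_conj_mem_degreeLT (hP.mem_degreeLT n)
  have hlow : ∀ k ∈ Finset.range n, ipm σ ((P n).map (starRingEnd ℂ)) (P k) = 0 := by
    intro k hk
    have hk' := degreeLT_mono (Finset.mem_range.mp hk) (hP.mem_degreeLT k)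
    have : ((P k).map (starRingEnd ℂ)).map (starRingEnd ℂ) = P k := by simp [Polynomial.map_map]
    rw [← this, ipm_map_conj, hP.orthogonal n _ (map_conj_mem_degreeLT hk'), map_zero]
  have hlead : starRingEnd ℂ ((P n).coeff n) = (P n).coeff n := by
    rw [Complex.eq_re_of_ofReal_le (hP.coeff_pos n).le, Complex.conj_ofReal]
  rw [hP.eq_sum hmom hmem, Finset.sum_range_succ, Finset.sum_eq_zero fun k hk => by
    rw [hlow k hk, zero_smul], zero_add, hP.ipm_eq_coeff_div hmom hmem, coeff_map, hlead,
    div_self (hP.coeff_ne_zero n), one_smul]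

lemma mem_realPolys (hmom : HasFiniteMoments σ) (n : ℕ) : P n ∈ realPolys :=
  _root_.mem_realPolys.mpr (hP.map_conj hmom n)

lemma apply_zero_eq_one [IsProbabilityMeasure σ] : P 0 = 1 := by
  obtain ⟨c, hc⟩ : ∃ c : ℝ, (P 0).coeff 0 = c := ⟨_, Complex.eq_re_of_ofReal_le (hP.coeff_pos 0).le⟩
  have hP0 : P 0 = (c : ℂ) • 1 := by
    have := Polynomial.mem_degreeLT.mp (hP.mem_degreeLT 0)
    rw [eq_C_of_degree_le_zero (Order.le_of_lt_succ this), hc, smul_eq_C_mul, mul_one]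
  have hc_pos : 0 < c := by simpa [hc] using hP.coeff_pos 0
  have hcc : c * c = 1 := by
    have := hP.ipm_self 0
    rw [hP0, ipm_smul_left, ipm_smul_right, ipm_one_one, Complex.conj_ofReal, mul_one,
      ← Complex.ofReal_mul, Complex.ofReal_eq_one] at this
    exact this
  have : c = 1 := by nlinarith
  rw [hP0, this, Complex.ofReal_one, one_smul]

lemma eq_sum_band (hmom : HasFiniteMoments σ) {n d : ℕ} {u : ℂ[X]}
    (hu : u ∈ degreeLT ℂ (n + d + 1)) (horth : ∀ k, k + d < n → ipm σ u (P k) = 0) :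
    u = ∑ j ∈ Finset.range (2 * d + 1),
      ipm σ u (extP P ((n : ℤ) - d + j)) • extP P ((n : ℤ) - d + j) := by
  set g : ℤ → ℂ[X] := fun i => ipm σ u (extP P i) • extP P i
  have hg_nat : ∀ k : ℕ, ipm σ u (P k) • P k = g k := fun k => by simp only [g, extP_natCast]
  have hg_neg : ∀ i : ℤ, i < 0 → g i = 0 := fun i hi => by
    simp only [g, extP_of_neg P hi, smul_zero]
  change u = ∑ j ∈ Finset.range (2 * d + 1), g ((n : ℤ) - d + j)
  rw [hP.eq_sum hmom hu]
  simp_rw [hg_nat]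
  rcases le_total d n with h | h
  · obtain ⟨m, rfl⟩ := Nat.exists_eq_add_of_le' h
    rw [show m + d + d + 1 = m + (2 * d + 1) by ring, Finset.sum_range_add _ m,
      Finset.sum_eq_zero (s := Finset.range m) fun k hk => ?_, zero_add]
    · exact Finset.sum_congr rfl fun j _ => by congr 1; push_cast; ring
    · rw [← hg_nat, horth k (by simp at hk; omega), zero_smul]
  · obtain ⟨e, rfl⟩ := Nat.exists_eq_add_of_le h
    rw [show 2 * (n + e) + 1 = e + (n + (n + e) + 1) by ring, Finset.sum_range_add _ e,
      Finset.sum_eq_zero (s := Finset.range e) fun j hj =>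
        hg_neg _ (by simp at hj; push_cast; omega), zero_add]
    exact Finset.sum_congr rfl fun k _ => by congr 1; push_cast; ring

end IsOrthonormalPolys

namespace CondII

variable {T : Module.End ℂ ℂ[X]} (hII : CondII T)
include hII

lemma X_pow_mem_degreeLT (k : ℕ) : T (X ^ k) ∈ degreeLT ℂ (k + 2) := by
  obtain ⟨ξ, -, hT⟩ := hII k
  rw [hT]
  refine Submodule.sum_mem _ fun j hj => mem_degreeLT.mpr ?_
  exact (degree_C_mul_X_pow_le _ _).trans_lt (by exact_mod_cast Finset.mem_range.mp hj)

lemma X_pow_mem_realPolys (k : ℕ) : T (X ^ k) ∈ realPolys := by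
  obtain ⟨ξ, -, hT⟩ := hII k
  rw [hT]
  exact Subring.sum_mem _ fun j _ =>
    mul_mem (C_mem_realPolys (Complex.conj_ofReal _)) (pow_mem X_mem_realPolys j)

lemma coeff_X_pow_pos (k : ℕ) : 0 < (T (X ^ k)).coeff (k + 1) := by
  obtain ⟨ξ, hξ, hT⟩ := hII k
  simpa [hT, finsetSum_coeff, coeff_C_mul_X_pow] using hξ

lemma mem_degreeLT {n : ℕ} {p : ℂ[X]} (hp : p ∈ degreeLT ℂ n) : T p ∈ degreeLT ℂ (n + 1) := by
  classical
  have : degreeLT ℂ n ≤ (degreeLT ℂ (n + 1)).comap T := by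
    rw [degreeLT_eq_span_X_pow, Submodule.span_le]
    intro x hx
    simp only [Finset.coe_image, Set.mem_image, Finset.mem_coe, Finset.mem_range] at hx
    obtain ⟨k, hk, rfl⟩ := hx
    exact degreeLT_mono (by omega) (hII.X_pow_mem_degreeLT k)
  exact this hp

lemma mem_realPolys {p : ℂ[X]} (hp : p ∈ realPolys) : T p ∈ realPolys := by
  rw [as_sum_range_C_mul_X_pow p, map_sum]
  refine Subring.sum_mem _ fun i _ => ?_
  rw [← smul_eq_C_mul, map_smul, smul_eq_C_mul]
  exact mul_mem (C_mem_realPolys (conj_coeff_of_mem_realPolys hp i)) (hII.X_pow_mem_realPolys i)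

lemma coeff_succ {n : ℕ} {p : ℂ[X]} (hp : p ∈ degreeLT ℂ (n + 1)) :
    (T p).coeff (n + 1) = p.coeff n * (T (X ^ n)).coeff (n + 1) := by
  have hsub := sub_smul_mem_degreeLT hp (_root_.X_pow_mem_degreeLT n.lt_succ_self) (by simp)
  have h0 := (degree_lt_iff_coeff_zero _ _).mp (Polynomial.mem_degreeLT.mp
    (hII.mem_degreeLT hsub)) (n + 1) le_rfl
  rwa [map_sub, map_smul, coeff_sub, coeff_smul, coeff_X_pow_self, div_one, sub_eq_zero,
    smul_eq_mul] at h0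

end CondII

lemma ipm_extP_eq_extZ {σ : Measure ℝ} {P : ℕ → ℂ[X]} {u : ℂ[X]} {f : ℕ → ℝ} {i : ℤ}
    (h : ∀ k : ℕ, (k : ℤ) = i → ipm σ u (P k) = f k) : ipm σ u (extP P i) = extZ f i := by
  unfold extP extZ
  split_ifs with hi
  · rw [ipm_zero_right, Complex.ofReal_zero]
  · exact h _ (Int.toNat_of_nonneg (not_lt.mp hi))

-- The entries of the matrices of `u ↦ X * u` and `u ↦ T (X * u)` in the basis `P`; they are real
-- when `P` has real coefficients.
def pencilA (σ : Measure ℝ) (P : ℕ → ℂ[X]) (n : ℕ) : ℝ := (ipm σ (X * P n) (P (n + 1))).re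

def pencilB (σ : Measure ℝ) (P : ℕ → ℂ[X]) (n : ℕ) : ℝ := (ipm σ (X * P n) (P n)).re

def pencilAl (σ : Measure ℝ) (T : Module.End ℂ ℂ[X]) (P : ℕ → ℂ[X]) (n : ℕ) : ℝ :=
  (ipm σ (T (X * P n)) (P n)).re

def pencilBe (σ : Measure ℝ) (T : Module.End ℂ ℂ[X]) (P : ℕ → ℂ[X]) (n : ℕ) : ℝ :=
  (ipm σ (T (X * P n)) (P (n + 1))).re

def pencilGa (σ : Measure ℝ) (T : Module.End ℂ ℂ[X]) (P : ℕ → ℂ[X]) (n : ℕ) : ℝ :=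
  (ipm σ (T (X * P n)) (P (n + 2))).re

namespace IsOrthonormalPolys

variable {σ : Measure ℝ} {P : ℕ → ℂ[X]} (hP : IsOrthonormalPolys σ P)
  (hmom : HasFiniteMoments σ)
include hP hmom

lemma ipm_X_mul_comm (m k : ℕ) : ipm σ (X * P m) (P k) = ipm σ (X * P k) (P m) := by
  rw [ipm_X_mul, ipm_comm_of_mem_realPolys (mul_mem X_mem_realPolys (hP.mem_realPolys hmom k))
    (hP.mem_realPolys hmom m)]

lemma X_mul_eq (n : ℕ) :
    X * P n = (extZ (pencilA σ P) ((n : ℤ) - 1) : ℂ) • extP P ((n : ℤ) - 1)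
      + (pencilB σ P n : ℂ) • P n + (pencilA σ P n : ℂ) • P (n + 1) := by
  have hX : ∀ k, X * P k ∈ degreeLT ℂ (k + 2) := fun k => X_mul_mem_degreeLT (hP.mem_degreeLT k)
  have hreal : ∀ k m, ipm σ (X * P k) (P m) = (ipm σ (X * P k) (P m)).re := fun k m =>
    ipm_eq_re_of_mem_realPolys (mul_mem X_mem_realPolys (hP.mem_realPolys hmom k))
      (hP.mem_realPolys hmom m)
  have hband := hP.eq_sum_band hmom (d := 1) (hX n) fun k hk => by
    rw [hP.ipm_X_mul_comm hmom, hP.orthogonal' n (degreeLT_mono (by omega) (hX k))]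
  have hlow : ipm σ (X * P n) (extP P ((n : ℤ) - 1)) = extZ (pencilA σ P) ((n : ℤ) - 1) :=
    ipm_extP_eq_extZ fun k hk => by
      obtain rfl : n = k + 1 := by omega
      rw [hP.ipm_X_mul_comm hmom, hreal]; rfl
  simp only [mul_one, Finset.sum_range_succ, Finset.sum_range_zero, zero_add, Nat.cast_zero,
    Nat.cast_one, Nat.cast_ofNat, add_zero, sub_add_cancel, extP_natCast] at hband
  rwa [show (n : ℤ) - 1 + 2 = ((n + 1 : ℕ) : ℤ) by push_cast; ring, extP_natCast, hlow, hreal,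
    hreal n (n + 1)] at hband

lemma pencilA_pos (n : ℕ) : 0 < pencilA σ P n := by
  have h : ipm σ (X * P n) (P (n + 1)) = (P n).coeff n / (P (n + 1)).coeff (n + 1) := by
    rw [hP.ipm_eq_coeff_div hmom (X_mul_mem_degreeLT (hP.mem_degreeLT n)), coeff_X_mul]
  have := h ▸ div_pos (hP.coeff_pos n) (hP.coeff_pos (n + 1))
  exact (Complex.pos_iff.mp this).1

variable {T : Module.End ℂ ℂ[X]} (hII : CondII T)
include hII

lemma pencilGa_pos (n : ℕ) : 0 < pencilGa σ T P n := by
  have hX := X_mul_mem_degreeLT (hP.mem_degreeLT n)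
  have h : ipm σ (T (X * P n)) (P (n + 2))
      = (P n).coeff n * (T (X ^ (n + 1))).coeff (n + 2) / (P (n + 2)).coeff (n + 2) := by
    rw [hP.ipm_eq_coeff_div hmom (hII.mem_degreeLT hX), hII.coeff_succ hX, coeff_X_mul]
  have := h ▸ div_pos (mul_pos (hP.coeff_pos n) (hII.coeff_X_pow_pos (n + 1)))
    (hP.coeff_pos (n + 2))
  exact (Complex.pos_iff.mp this).1

lemma T_X_mul_eq (hIII : CondIII σ T) (n : ℕ) :
    T (X * P n) = (extZ (pencilGa σ T P) ((n : ℤ) - 2) : ℂ) • extP P ((n : ℤ) - 2)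
      + (extZ (pencilBe σ T P) ((n : ℤ) - 1) : ℂ) • extP P ((n : ℤ) - 1)
      + (pencilAl σ T P n : ℂ) • P n + (pencilBe σ T P n : ℂ) • P (n + 1)
      + (pencilGa σ T P n : ℂ) • P (n + 2) := by
  have hTX : ∀ k, T (X * P k) ∈ degreeLT ℂ (k + 3) := fun k =>
    hII.mem_degreeLT (X_mul_mem_degreeLT (hP.mem_degreeLT k))
  have hreal : ∀ k m, ipm σ (T (X * P k)) (P m) = (ipm σ (T (X * P k)) (P m)).re := fun k m =>
    ipm_eq_re_of_mem_realPolys (hII.mem_realPolys (mul_mem X_mem_realPolys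
      (hP.mem_realPolys hmom k))) (hP.mem_realPolys hmom m)
  have hcomm : ∀ m k, ipm σ (T (X * P m)) (P k) = ipm σ (T (X * P k)) (P m) := fun m k => by
    rw [hIII, ipm_comm_of_mem_realPolys (hII.mem_realPolys (mul_mem X_mem_realPolys
      (hP.mem_realPolys hmom k))) (hP.mem_realPolys hmom m)]
  have hband := hP.eq_sum_band hmom (d := 2) (hTX n) fun k hk => by
    rw [hcomm, hP.orthogonal' n (degreeLT_mono (by omega) (hTX k))]
  have hlow₂ :
      ipm σ (T (X * P n)) (extP P ((n : ℤ) - 2)) = extZ (pencilGa σ T P) ((n : ℤ) - 2) :=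
    ipm_extP_eq_extZ fun k hk => by
      obtain rfl : n = k + 2 := by omega
      rw [hcomm, hreal]; rfl
  have hlow₁ :
      ipm σ (T (X * P n)) (extP P ((n : ℤ) - 1)) = extZ (pencilBe σ T P) ((n : ℤ) - 1) :=
    ipm_extP_eq_extZ fun k hk => by
      obtain rfl : n = k + 1 := by omega
      rw [hcomm, hreal]; rfl
  simp only [show 2 * 2 + 1 = 5 from rfl, Finset.sum_range_succ, Finset.sum_range_zero, zero_add,
    Nat.cast_zero, Nat.cast_one, Nat.cast_ofNat, add_zero] at hband
  rwa [show (n : ℤ) - 2 + 1 = n - 1 by ring, show (n : ℤ) - 2 + 2 = n by ring,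
    show (n : ℤ) - 2 + 3 = ((n + 1 : ℕ) : ℤ) by push_cast; ring,
    show (n : ℤ) - 2 + 4 = ((n + 2 : ℕ) : ℤ) by push_cast; ring, extP_natCast, extP_natCast,
    extP_natCast, hlow₂, hlow₁, hreal, hreal n (n + 1), hreal n (n + 2)] at hband

end IsOrthonormalPolys

lemma exists_pos_eq_smul_add_smul_one {u w : ℂ[X]} (hu : u ∈ degreeLT ℂ 2)
    (hw : w ∈ degreeLT ℂ 2) (hu_real : u ∈ realPolys) (hw_real : w ∈ realPolys)
    (hu₁ : 0 < u.coeff 1) (hw₁ : 0 < w.coeff 1) :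
    ∃ α β : ℝ, 0 < α ∧ u = (α : ℂ) • w + (β : ℂ) • 1 := by
  set c := u.coeff 1 / w.coeff 1
  have hc : 0 < c := div_pos hu₁ hw₁
  have hc_re : c = c.re := Complex.eq_re_of_ofReal_le hc.le
  have hr : u - c • w ∈ degreeLT ℂ 1 := sub_smul_mem_degreeLT hu hw hw₁.ne'
  have hr_real : u - c • w ∈ realPolys := by
    rw [smul_eq_C_mul]
    exact sub_mem hu_real (mul_mem (C_mem_realPolys (by rw [hc_re, Complex.conj_ofReal])) hw_real)
  refine ⟨c.re, ((u - c • w).coeff 0).re, (Complex.pos_iff.mp hc).1, ?_⟩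
  have hr_C : u - c • w = C ((u - c • w).coeff 0) :=
    eq_C_of_degree_le_zero (Order.le_of_lt_succ (mem_degreeLT.mp hr))
  rw [← hc_re, Complex.conj_eq_iff_re.mp (conj_coeff_of_mem_realPolys hr_real 0),
    smul_eq_C_mul ((u - c • w).coeff 0), mul_one, ← hr_C, add_sub_cancel]

-- The recurrence solved for `p (n + 2)`, with `if`s in place of `extP` so that the recursion
-- is well-founded.
def assocPoly (Θ : JacobiPencil) : ℕ → ℂ[X]
  | 0 => 1
  | 1 => C (Θ.α : ℂ) * X + C (Θ.β : ℂ)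
  | n + 2 =>
      C (Θ.ga n : ℂ)⁻¹ *
        (- C (extZ Θ.ga ((n : ℤ) - 2) : ℂ) * (if 2 ≤ n then assocPoly Θ (n - 2) else 0)
          - (C (extZ Θ.be ((n : ℤ) - 1) : ℂ) - X * C (extZ Θ.a ((n : ℤ) - 1) : ℂ))
              * (if 1 ≤ n then assocPoly Θ (n - 1) else 0)
          - (C (Θ.al n : ℂ) - X * C (Θ.b n : ℂ)) * assocPoly Θ n
          - (C (Θ.be n : ℂ) - X * C (Θ.a n : ℂ)) * assocPoly Θ (n + 1))

lemma isAssociatedPolynomials_assocPoly (Θ : JacobiPencil) :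
    IsAssociatedPolynomials Θ (assocPoly Θ) := by
  refine ⟨by rw [assocPoly], by rw [assocPoly], fun n => ?_⟩
  have e₂ := extP_eq_ite (assocPoly Θ) n 2
  have e₁ := extP_eq_ite (assocPoly Θ) n 1
  rw [Nat.cast_ofNat] at e₂
  rw [Nat.cast_one] at e₁
  rw [assocPoly, ← mul_assoc, ← C_mul, mul_inv_cancel₀ (by exact_mod_cast (Θ.hga n).ne'),
    C_1, one_mul, e₂, e₁]

lemma aeval_apply_one_eq_of_relations {Θ : JacobiPencil} {p : ℕ → ℂ[X]}
    (hp : IsAssociatedPolynomials Θ p)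
    {T : Module.End ℂ ℂ[X]} {P : ℕ → ℂ[X]} (h0 : P 0 = 1)
    (h1 : P 1 = (Θ.α : ℂ) • T 1 + (Θ.β : ℂ) • 1)
    (hX : ∀ n, X * P n = (extZ Θ.a ((n : ℤ) - 1) : ℂ) • extP P ((n : ℤ) - 1)
      + (Θ.b n : ℂ) • P n + (Θ.a n : ℂ) • P (n + 1))
    (hTX : ∀ n, T (X * P n) = (extZ Θ.ga ((n : ℤ) - 2) : ℂ) • extP P ((n : ℤ) - 2)
      + (extZ Θ.be ((n : ℤ) - 1) : ℂ) • extP P ((n : ℤ) - 1)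
      + (Θ.al n : ℂ) • P n + (Θ.be n : ℂ) • P (n + 1) + (Θ.ga n : ℂ) • P (n + 2))
    (n : ℕ) : aeval T (p n) 1 = P n := by
  induction n using Nat.strong_induction_on with
  | _ n ih =>
  match n, ih with
  | 0, _ => rw [hp.1, map_one (aeval T), h0]; rfl
  | 1, _ => simp [hp.2.1, h1, Module.algebraMap_end_apply]
  | n + 2, ih =>
    have hrec := congrArg (fun q => aeval T q 1) (hp.2.2 n)
    have hext : ∀ i : ℤ, i < n → aeval T (extP p i) 1 = extP P i := fun i hi =>
      apply_extP (f := fun q => aeval T q 1) (by simp) fun k hk => ih k (by omega)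
    simp only [map_sub, map_neg, map_mul, aeval_C, aeval_X, LinearMap.sub_apply,
      LinearMap.neg_apply, Module.End.mul_apply, Module.algebraMap_end_apply, map_smul] at hrec
    rw [hext _ (by omega), hext _ (by omega), ih n (by omega), ih (n + 1) (by omega)] at hrec
    have hXT := congrArg T (hX n)
    simp only [map_add, map_smul] at hXT
    refine smul_right_injective ℂ[X] (r := (Θ.ga n : ℂ)) (by exact_mod_cast (Θ.hga n).ne') ?_
    simp only [hrec]
    linear_combination (norm := module) hTX n - hXT

/-- Sufficiency part of the inverse spectral theorem: given a suitable measure `σ` and an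
operator `T` satisfying conditions (ii) and (iii), the functional
`S(u,v) = ∫ u(T)(1) conj(v(T)(1)) dσ` is the spectral function of some Jacobi-type pencil. -/
theorem inverse_spectral_sufficiency (σ : Measure ℝ) [IsProbabilityMeasure σ]
    (hmom : HasFiniteMoments σ) (hpos : PosOnPolys σ)
    (T : Module.End ℂ (Polynomial ℂ)) (hII : CondII T) (hIII : CondIII σ T) :
    ∃ (Θ : JacobiPencil) (p : ℕ → Polynomial ℂ), IsAssociatedPolynomials Θ p ∧
      ∀ n m : ℕ, ipm σ ((Polynomial.aeval T (p n)) 1) ((Polynomial.aeval T (p m)) 1)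
        = if n = m then 1 else 0 := by
  obtain ⟨P, hP⟩ := exists_isOrthonormalPolys hmom hpos
  have hT1 : T 1 ∈ degreeLT ℂ 2 := by simpa using hII.X_pow_mem_degreeLT 0
  obtain ⟨α, β, hα, h1⟩ := exists_pos_eq_smul_add_smul_one (hP.mem_degreeLT 1) hT1
    (hP.mem_realPolys hmom 1) (by simpa using hII.X_pow_mem_realPolys 0) (hP.coeff_pos 1)
    (by simpa using hII.coeff_X_pow_pos 0)
  let Θ : JacobiPencil :=
    { a := pencilA σ P, b := pencilB σ P, al := pencilAl σ T P, be := pencilBe σ T P,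
      ga := pencilGa σ T P, α := α, β := β, ha := hP.pencilA_pos hmom,
      hga := hP.pencilGa_pos hmom hII, hα := hα }
  have hΘ := isAssociatedPolynomials_assocPoly Θ
  have heval := aeval_apply_one_eq_of_relations hΘ hP.apply_zero_eq_one h1 (hP.X_mul_eq hmom)
    (hP.T_X_mul_eq hmom hII hIII)
  exact ⟨Θ, assocPoly Θ, hΘ, fun n m => by rw [heval n, heval m, hP.ipm_eq_ite]⟩

end
end

section
/- Let a > 0, b, d ∈ ℝ, let σ be a nonnegative Borel measure on ℝ with σ(ℝ) = 1 and σ(ℝ ∖ [−c, c]) = 0 for some 0 < c < 1, let s_k := ∫ x^k dσ (with s_{−1} := 0), s⃗ := (0, s₀, s₁, …) ∈ ℓ², and define Â w = a·S w + b·w + d·⟨w, s⃗⟩·e₀ on ℓ² (S the right shift). Let z ∈ ℂ satisfy |z − b| > a, set s(z) := Σ_{k=0}^∞ (−1)·(a/(z−b))^{k+1}·s_{k−1} (the series converges absolutely), and assume a + d·s(z) ≠ 0. Then the vector f := (1/(a + d·s(z)))·Σ_{k=0}^∞ (−1)·(a/(z−b))^{k+1}·e_k belongs to ℓ² and satisfies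 Â f − z·f = e₀; that is, f is the resolvent of Â at z applied to e₀. -/
open MeasureTheory

noncomputable section

/-- The right shift `S(c₀, c₁, c₂, …) = (0, c₀, c₁, …)` on sequences. -/
def shiftSeq (w : ℕ → ℂ) : ℕ → ℂ := fun k => if k = 0 then 0 else w (k - 1)

/-- The operator `Â w = a·S w + b·w + d·⟨w, s⃗⟩·e₀` on sequences. -/
def hatA (a b d : ℝ) (sZ : ℕ → ℂ) (w : ℕ → ℂ) : ℕ → ℂ := fun k =>
  (a : ℂ) * shiftSeq w k + (b : ℂ) * w k
    + (if k = 0 then (d : ℂ) * ∑' j : ℕ, w j * (starRingEnd ℂ) (sZ j) else 0)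

/-!
With `r = a / (z - b)` we have `‖r‖ < 1`, and `f` is the geometric sequence `f k = f 0 * r ^ k`,
hence in `ℓ²`. Since `(b - z) * r = -a`, it satisfies `a * f k + (b - z) * f (k + 1) = 0`, so
`(Â - z) f` vanishes off `e₀`; at `e₀` it equals `(a + d * s(z)) / (a + d * s(z)) = 1`. The
moments of `σ` are bounded by `1` because `σ` lives on `[-c, c] ⊆ [-1, 1]`, which makes the
series for `s(z)` converge absolutely.
-/

theorem norm_integral_pow_le_one {σ : Measure ℝ} [IsProbabilityMeasure σ] {c : ℝ} (hc : c ≤ 1)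
    (hsupp : σ (Set.Icc (-c) c)ᶜ = 0) (k : ℕ) : ‖∫ x, x ^ k ∂σ‖ ≤ 1 := by
  have hbound : ∀ᵐ x ∂σ, ‖x ^ k‖ ≤ 1 := by
    filter_upwards [mem_ae_iff.mpr hsupp] with x hx
    have hx : |x| ≤ 1 := abs_le.mpr ⟨by linarith [hx.1], by linarith [hx.2]⟩
    simpa [abs_pow] using pow_le_one₀ (abs_nonneg x) hx
  simpa using norm_integral_le_of_norm_le_const hbound

theorem summable_norm_pow_mul_of_norm_le {𝕜 : Type*} [NormedField 𝕜] {r : 𝕜} (hr : ‖r‖ < 1)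
    {u : ℕ → 𝕜} {M : ℝ} (hu : ∀ k, ‖u k‖ ≤ M) : Summable fun k => ‖r ^ k * u k‖ := by
  refine .of_nonneg_of_le (fun k => norm_nonneg _) (fun k => ?_)
    ((summable_geometric_of_lt_one (norm_nonneg r) hr).mul_right M)
  rw [norm_mul, norm_pow]
  exact mul_le_mul_of_nonneg_left (hu k) (pow_nonneg (norm_nonneg r) k)

theorem memℓp_geometric {𝕜 : Type*} [NormedField 𝕜] {r : 𝕜} (hr : ‖r‖ < 1) {p : ENNReal}
    (hp : 1 ≤ p) : Memℓp (fun k : ℕ => r ^ k) p := by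
  have h1 : Memℓp (fun k : ℕ => r ^ k) 1 :=
    memℓp_gen (by simpa using summable_geometric_of_lt_one (norm_nonneg r) hr)
  exact h1.of_exponent_ge hp

section Resolvent

variable {a b d : ℝ} {sZ : ℕ → ℂ}

theorem hatA_zero (w : ℕ → ℂ) :
    hatA a b d sZ w 0 = b * w 0 + d * ∑' j, w j * starRingEnd ℂ (sZ j) := by
  simp [hatA, shiftSeq]

theorem hatA_succ (w : ℕ → ℂ) (k : ℕ) : hatA a b d sZ w (k + 1) = a * w k + b * w (k + 1) := by
  simp [hatA, shiftSeq]

theorem hatA_resolvent_apply {z : ℂ} (hreal : ∀ j, starRingEnd ℂ (sZ j) = sZ j)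
    (hzb : z - b ≠ 0) (hden : (a : ℂ) + d * ∑' j, -(((a : ℂ) / (z - b)) ^ (j + 1)) * sZ j ≠ 0)
    {f : ℕ → ℂ} (hf : ∀ k, f k = ((a : ℂ) + d * ∑' j, -(((a : ℂ) / (z - b)) ^ (j + 1)) * sZ j)⁻¹
      * -(((a : ℂ) / (z - b)) ^ (k + 1)))
    (k : ℕ) : hatA a b d sZ f k - z * f k = if k = 0 then 1 else 0 := by
  set r : ℂ := a / (z - b)
  set S : ℂ := ∑' j, -(r ^ (j + 1)) * sZ j
  have hr : (b - z) * r = -a := by rw [← neg_sub, neg_mul, mul_div_cancel₀ _ hzb]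
  have hpair : ∑' j, f j * starRingEnd ℂ (sZ j) = (a + d * S)⁻¹ * S := by
    simp_rw [hreal, hf, mul_assoc, tsum_mul_left]
    rfl
  rcases k with _ | k
  · calc hatA a b d sZ f 0 - z * f 0 = (a + d * S)⁻¹ * (a + d * S) := by
          rw [hatA_zero, hpair, hf 0]
          linear_combination (-(a + d * S)⁻¹) * hr
      _ = 1 := inv_mul_cancel₀ hden
  · rw [hatA_succ, hf, hf, if_neg k.succ_ne_zero]
    linear_combination (-(a + d * S)⁻¹ * r ^ (k + 1)) * hr

end Resolvent

theorem hatA_resolvent_at_e0_general (a b d c : ℝ) (ha : 0 < a) (hc1 : c < 1)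
    (σ : Measure ℝ) [IsProbabilityMeasure σ] (hsupp : σ (Set.Icc (-c) c)ᶜ = 0)
    (s : ℕ → ℝ) (hs : ∀ k : ℕ, s k = ∫ x, x ^ k ∂σ)
    (sZ : ℕ → ℂ) (hsZ0 : sZ 0 = 0) (hsZ : ∀ k : ℕ, sZ (k + 1) = (s k : ℂ))
    (z : ℂ) (hz : a < ‖z - (b : ℂ)‖)
    (hden : (a : ℂ) + (d : ℂ) * (∑' k : ℕ, -(((a : ℂ) / (z - b)) ^ (k + 1)) * sZ k) ≠ 0)
    (f : ℕ → ℂ)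
    (hf : ∀ k : ℕ, f k =
      ((a : ℂ) + (d : ℂ) * (∑' j : ℕ, -(((a : ℂ) / (z - b)) ^ (j + 1)) * sZ j))⁻¹
        * (-(((a : ℂ) / (z - b)) ^ (k + 1)))) :
    Summable (fun k : ℕ => ‖(((a : ℂ) / (z - b)) ^ (k + 1)) * sZ k‖) ∧
    Memℓp f 2 ∧
    (∀ k : ℕ, hatA a b d sZ f k - z * f k = if k = 0 then 1 else 0) := by
  set r : ℂ := a / (z - b)
  have hzb : z - b ≠ 0 := norm_pos_iff.mp (ha.trans hz)
  have hr : ‖r‖ < 1 := by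
    rw [norm_div, div_lt_one (ha.trans hz)]
    simpa [abs_of_pos ha] using hz
  have hmoment : ∀ k, ‖sZ k‖ ≤ 1
    | 0 => by simp [hsZ0]
    | k + 1 => by
      rw [hsZ, hs, Complex.norm_real]
      exact norm_integral_pow_le_one hc1.le hsupp k
  have hreal : ∀ k, starRingEnd ℂ (sZ k) = sZ k
    | 0 => by simp [hsZ0]
    | k + 1 => by rw [hsZ, Complex.conj_ofReal]
  refine ⟨?_, ?_, hatA_resolvent_apply hreal hzb hden hf⟩
  · refine ((summable_norm_pow_mul_of_norm_le hr hmoment).mul_left ‖r‖).congr fun k => ?_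
    rw [pow_succ', mul_assoc, norm_mul r]
  · have hgeom : f = fun k => f 0 * r ^ k := funext fun k => by
      rw [hf, hf 0, pow_succ']
      ring
    exact hgeom ▸ (memℓp_geometric hr (by norm_num)).const_mul _

/-- Explicit formula for the resolvent of `Â` at `z` applied to `e₀`: with
`s(z) = Σ_k −(a/(z−b))^{k+1} s_{k−1}` and `f = (a + d·s(z))⁻¹ Σ_k −(a/(z−b))^{k+1} e_k`,
the series for `s(z)` converges absolutely, `f ∈ ℓ²`, and `Â f − z f = e₀`. -/
theorem hatA_resolvent_at_e0 (a b d c : ℝ) (ha : 0 < a) (hc0 : 0 < c) (hc1 : c < 1)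
    (σ : Measure ℝ) [IsProbabilityMeasure σ] (hsupp : σ (Set.Icc (-c) c)ᶜ = 0)
    (s : ℕ → ℝ) (hs : ∀ k : ℕ, s k = ∫ x, x ^ k ∂σ)
    (sZ : ℕ → ℂ) (hsZ0 : sZ 0 = 0) (hsZ : ∀ k : ℕ, sZ (k + 1) = (s k : ℂ))
    (z : ℂ) (hz : a < ‖z - (b : ℂ)‖)
    (hden : (a : ℂ) + (d : ℂ) * (∑' k : ℕ, -(((a : ℂ) / (z - b)) ^ (k + 1)) * sZ k) ≠ 0)
    (f : ℕ → ℂ)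
    (hf : ∀ k : ℕ, f k =
      ((a : ℂ) + (d : ℂ) * (∑' j : ℕ, -(((a : ℂ) / (z - b)) ^ (j + 1)) * sZ j))⁻¹
        * (-(((a : ℂ) / (z - b)) ^ (k + 1)))) :
    Summable (fun k : ℕ => ‖(((a : ℂ) / (z - b)) ^ (k + 1)) * sZ k‖) ∧
    Memℓp f 2 ∧
    (∀ k : ℕ, hatA a b d sZ f k - z * f k = if k = 0 then 1 else 0) :=
  hatA_resolvent_at_e0_general a b d c ha hc1 σ hsupp s hs sZ hsZ0 hsZ z hz hden f hf

end
end

section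
/- Let Θ be a Jacobi-type pencil with associated operator A and associated polynomials (p_n). Let (r_n) be the polynomials defined by r₀(λ) = 1 and the three-term recurrence λ·r_n = a_{n−1} r_{n−1} + b_n r_n + a_n r_{n+1} (terms with negative indices omitted), let σ be any nonnegative Borel measure on ℝ with ∫ r_n(x) r_m(x) dσ = δ_{n,m} for all n, m, and let T be the linear operator on complex polynomials determined by T(r_n) = Σ_m (A e_n)(m)·r_m for all n ≥ 0 (the model representation of A in L²_σ). Then ∫ (p_n(T)(1))(x) · conj((p_m(T)(1))(x)) dσ(x) = δ_{n,m} for all n, m ≥ 0. -/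
open Polynomial MeasureTheory

noncomputable section

/-!
Let `U : (ℕ →₀ ℂ) → M` send `e_n` to `r_n`. The defining property of `T` says exactly that
`T ∘ U = U ∘ A`. Applying the recurrence of the `p_n` to `r_0` and pushing `A J₃ e_n = J₅ e_n`
through `U` then shows, by strong induction, that `p_n(T) r_0 = r_n`; so the vectors
`p_n(T)(1)` are the orthonormal polynomials `r_n` themselves.
-/

namespace JacobiPencil

open Finsupp

variable {M : Type*} [AddCommGroup M] [Module ℂ M]

section LinearCombination

variable (r : ℕ → M)

@[simp]
lemma linearCombination_e (k : ℕ) : linearCombination ℂ r (e k) = r k := by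
  simp [e]

lemma linearCombination_J3col (Θ : JacobiPencil) (n : ℕ) :
    linearCombination ℂ r (J3col Θ n) =
      (extZ Θ.a ((n : ℤ) - 1) : ℂ) • linearCombination ℂ r (eZ ((n : ℤ) - 1))
        + (Θ.b n : ℂ) • r n + (Θ.a n : ℂ) • r (n + 1) := by
  simp [J3col]

lemma linearCombination_J5col (Θ : JacobiPencil) (n : ℕ) :
    linearCombination ℂ r (J5col Θ n) =
      (extZ Θ.ga ((n : ℤ) - 2) : ℂ) • linearCombination ℂ r (eZ ((n : ℤ) - 2))
        + (extZ Θ.be ((n : ℤ) - 1) : ℂ) • linearCombination ℂ r (eZ ((n : ℤ) - 1))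
        + (Θ.al n : ℂ) • r n + (Θ.be n : ℂ) • r (n + 1) + (Θ.ga n : ℂ) • r (n + 2) := by
  simp [J5col]

end LinearCombination

variable {r : ℕ → M} {Θ : JacobiPencil} {A : Module.End ℂ (ℕ →₀ ℂ)} {T : Module.End ℂ M}
  {p : ℕ → ℂ[X]}

lemma comp_linearCombination_eq (hT : ∀ n : ℕ, T (r n) = (A (e n)).sum fun m c => c • r m) :
    T ∘ₗ linearCombination ℂ r = linearCombination ℂ r ∘ₗ A := by
  refine Finsupp.lhom_ext' fun n => LinearMap.ext_ring ?_
  simpa [e, ← linearCombination_apply] using hT n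

lemma aeval_extP_apply {v : M} {N : ℕ} (h : ∀ k < N, aeval T (p k) v = r k) {k : ℤ}
    (hk : k < N) : aeval T (extP p k) v = linearCombination ℂ r (eZ k) := by
  unfold extP eZ
  split_ifs with hneg
  · simp
  · rw [linearCombination_e, h k.toNat (by omega)]

lemma aeval_assocPoly_one_apply (hA : IsAssociatedOperator Θ A)
    (hp : IsAssociatedPolynomials Θ p)
    (hTA : T ∘ₗ linearCombination ℂ r = linearCombination ℂ r ∘ₗ A) :
    aeval T (p 1) (r 0) = r 1 := by
  have hT0 : T (r 0) = (Θ.α : ℂ)⁻¹ • (r 1 - (Θ.β : ℂ) • r 0) := by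
    simpa [hA.1] using LinearMap.congr_fun hTA (e 0)
  have hα : (Θ.α : ℂ) ≠ 0 := by exact_mod_cast Θ.hα.ne'
  simp only [hp.2.1, map_add, map_mul, aeval_C, aeval_X, Module.End.mul_apply,
    LinearMap.add_apply, Module.algebraMap_end_apply, hT0, smul_smul, mul_inv_cancel₀ hα]
  module

lemma aeval_assocPoly_add_two_apply (hA : IsAssociatedOperator Θ A)
    (hp : IsAssociatedPolynomials Θ p)
    (hTA : T ∘ₗ linearCombination ℂ r = linearCombination ℂ r ∘ₗ A) {n : ℕ}
    (ih : ∀ k < n + 2, aeval T (p k) (r 0) = r k) :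
    aeval T (p (n + 2)) (r 0) = r (n + 2) := by
  have hJ := LinearMap.congr_fun hTA (J3col Θ n)
  simp only [LinearMap.comp_apply, hA.2 n, linearCombination_J3col, linearCombination_J5col,
    map_add, map_smul] at hJ
  have hrec := congr_arg (fun q => aeval T q (r 0)) (hp.2.2 n)
  simp only [map_mul, map_sub, map_neg, aeval_C, aeval_X, Module.End.mul_apply,
    LinearMap.sub_apply, LinearMap.neg_apply, Module.algebraMap_end_apply, map_smul] at hrec
  rw [aeval_extP_apply ih (by omega), aeval_extP_apply ih (by omega), ih n (by omega),
    ih (n + 1) (by omega)] at hrec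
  have hga : (Θ.ga n : ℂ) ≠ 0 := by exact_mod_cast (Θ.hga n).ne'
  refine smul_right_injective M hga ?_
  linear_combination (norm := module) hrec + hJ

theorem aeval_assocPoly_apply (hA : IsAssociatedOperator Θ A)
    (hp : IsAssociatedPolynomials Θ p)
    (hTA : T ∘ₗ linearCombination ℂ r = linearCombination ℂ r ∘ₗ A) (n : ℕ) :
    aeval T (p n) (r 0) = r n := by
  induction n using Nat.strong_induction_on with
  | _ n ih =>
    match n with
    | 0 => simp [hp.1]
    | 1 => exact aeval_assocPoly_one_apply hA hp hTA
    | n + 2 => exact aeval_assocPoly_add_two_apply hA hp hTA ih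

end JacobiPencil

theorem assoc_poly_orthonormal_in_model_general (Θ : JacobiPencil) (A : Module.End ℂ (ℕ →₀ ℂ))
    (hA : IsAssociatedOperator Θ A) (p : ℕ → Polynomial ℂ)
    (hp : IsAssociatedPolynomials Θ p)
    (r : ℕ → Polynomial ℂ) (hr0 : r 0 = 1)
    (σ : Measure ℝ)
    (horth : ∀ n m : ℕ, ipm σ (r n) (r m) = if n = m then 1 else 0)
    (T : Module.End ℂ (Polynomial ℂ))
    (hT : ∀ n : ℕ, T (r n) = (A (e n)).sum fun m c => c • r m) (n m : ℕ) :
    ipm σ ((Polynomial.aeval T (p n)) 1) ((Polynomial.aeval T (p m)) 1)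
      = if n = m then 1 else 0 := by
  have hpr := JacobiPencil.aeval_assocPoly_apply hA hp
    (JacobiPencil.comp_linearCombination_eq hT)
  rw [← hr0, hpr, hpr]
  exact horth n m

/-- Orthonormality of the associated polynomials with respect to the model representation:
`∫ p_n(T)(1) conj(p_m(T)(1)) dσ = δ_{n,m}`, where `T` is the model representation in
`L²_σ` of the associated operator `A`. -/
theorem assoc_poly_orthonormal_in_model (Θ : JacobiPencil) (A : Module.End ℂ (ℕ →₀ ℂ))
    (hA : IsAssociatedOperator Θ A) (p : ℕ → Polynomial ℂ)
    (hp : IsAssociatedPolynomials Θ p)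
    (r : ℕ → Polynomial ℂ) (hr0 : r 0 = 1)
    (hrec : ∀ n : ℕ, X * r n =
      C (extZ Θ.a ((n : ℤ) - 1) : ℂ) * extP r ((n : ℤ) - 1) + C (Θ.b n : ℂ) * r n
        + C (Θ.a n : ℂ) * r (n + 1))
    (σ : Measure ℝ)
    (horth : ∀ n m : ℕ, ipm σ (r n) (r m) = if n = m then 1 else 0)
    (T : Module.End ℂ (Polynomial ℂ))
    (hT : ∀ n : ℕ, T (r n) = (A (e n)).sum fun m c => c • r m) (n m : ℕ) :
    ipm σ ((Polynomial.aeval T (p n)) 1) ((Polynomial.aeval T (p m)) 1)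
      = if n = m then 1 else 0 :=
  assoc_poly_orthonormal_in_model_general Θ A hA p hp r hr0 σ horth T hT n m

end
end
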